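/- arXiv:1412.4376 — 5 statements merged into one kernel-verified Lean document; each statement's English description precedes it below -/
import Mathlib

section
/- Let α be a real number, let r ∈ {0,1} with α > r, and let φ : (0,1) → [0,∞) be measurable with ∫₀¹ x^{3−2r} φ(x)² dx < ∞. Then ∫₀¹ x^{2α−2r−1} (∫ₓ¹ y^{1−α} φ(y) dy)² dx ≤ (α−r)^{−2} ∫₀¹ x^{3−2r} φ(x)² dx. -/
/-!
With `β = α - r` and `f y = (y ^ (1 - α) φ y)⁺`, the claim is the Hardy inequality
`∫₀¹ x^{2β-1} (∫ₓ¹ f)² ≤ β⁻² ∫₀¹ y^{2β+1} f²`. Cauchy–Schwarz against the weight `y^{-β-1}`,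
whose integral over `(x, ∞)` is `x^{-β}/β`, gives `(∫ₓ¹ f)² ≤ β⁻¹ x^{-β} ∫ₓ¹ y^{β+1} f²`.
Multiplying by `x^{2β-1}` and swapping the order of integration (Tonelli) leaves the inner
integral `∫₀^y x^{β-1} dx = y^β/β`, which produces the second factor `β⁻¹`.
-/
open MeasureTheory Set
open scoped ENNReal

theorem ENNReal.lintegral_mul_sq_le {α : Type*} [MeasurableSpace α] {μ : Measure α}
    {f g : α → ℝ≥0∞} (hf : AEMeasurable f μ) (hg : AEMeasurable g μ) :
    (∫⁻ x, f x * g x ∂μ) ^ 2 ≤ (∫⁻ x, f x ^ 2 ∂μ) * ∫⁻ x, g x ^ 2 ∂μ := by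
  have h := ENNReal.lintegral_mul_le_Lp_mul_Lq μ .two_two hf hg
  simp only [Pi.mul_apply, ENNReal.rpow_two] at h
  have sq_rpow_half (t : ℝ≥0∞) : (t ^ (1 / 2 : ℝ)) ^ 2 = t := by
    rw [← ENNReal.rpow_two, ← ENNReal.rpow_mul]; norm_num
  calc (∫⁻ x, f x * g x ∂μ) ^ 2
      ≤ ((∫⁻ x, f x ^ 2 ∂μ) ^ (1 / 2 : ℝ) * (∫⁻ x, g x ^ 2 ∂μ) ^ (1 / 2 : ℝ)) ^ 2 := by gcongr
    _ = (∫⁻ x, f x ^ 2 ∂μ) * ∫⁻ x, g x ^ 2 ∂μ := by rw [mul_pow, sq_rpow_half, sq_rpow_half]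

theorem ENNReal.ofReal_sq_le (t : ℝ) : ENNReal.ofReal t ^ 2 ≤ ENNReal.ofReal (t ^ 2) := by
  rcases le_total 0 t with ht | ht
  · rw [ENNReal.ofReal_pow ht]
  · simp [ENNReal.ofReal_of_nonpos ht]

theorem ENNReal.ofReal_rpow_mul_ofReal_rpow {x : ℝ} (hx : 0 < x) (a b : ℝ) :
    ENNReal.ofReal (x ^ a) * ENNReal.ofReal (x ^ b) = ENNReal.ofReal (x ^ (a + b)) := by
  rw [← ENNReal.ofReal_mul (by positivity), Real.rpow_add hx]

theorem ENNReal.ofReal_rpow_sq {x : ℝ} (hx : 0 < x) (a : ℝ) :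
    ENNReal.ofReal (x ^ a) ^ 2 = ENNReal.ofReal (x ^ (2 * a)) := by
  rw [sq, ENNReal.ofReal_rpow_mul_ofReal_rpow hx, two_mul]

theorem lintegral_Ioo_zero_rpow_sub_one {β y : ℝ} (hβ : 0 < β) (hy : 0 < y) :
    ∫⁻ x in Ioo 0 y, ENNReal.ofReal (x ^ (β - 1)) =
      ENNReal.ofReal β⁻¹ * ENNReal.ofReal (y ^ β) := by
  have hint : IntegrableOn (fun x : ℝ => x ^ (β - 1)) (Ioo 0 y) :=
    (intervalIntegral.integrableOn_Ioo_rpow_iff hy).mpr (by linarith)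
  rw [← ofReal_integral_eq_lintegral_ofReal hint
      ((ae_restrict_iff' measurableSet_Ioo).mpr (ae_of_all _ fun x hx =>
        Real.rpow_nonneg hx.1.le _)),
    ← integral_Ioc_eq_integral_Ioo, ← intervalIntegral.integral_of_le hy.le,
    integral_rpow (Or.inl (by linarith)), sub_add_cancel, Real.zero_rpow hβ.ne', sub_zero,
    ← ENNReal.ofReal_mul (by positivity), div_eq_inv_mul]

theorem lintegral_Ioi_rpow_neg_sub_one {β x : ℝ} (hβ : 0 < β) (hx : 0 < x) :
    ∫⁻ y in Ioi x, ENNReal.ofReal (y ^ (-β - 1)) =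
      ENNReal.ofReal β⁻¹ * ENNReal.ofReal (x ^ (-β)) := by
  have hint : IntegrableOn (fun y : ℝ => y ^ (-β - 1)) (Ioi x) :=
    integrableOn_Ioi_rpow_of_lt (by linarith) hx
  rw [← ofReal_integral_eq_lintegral_ofReal hint
      ((ae_restrict_iff' measurableSet_Ioi).mpr (ae_of_all _ fun y hy =>
        Real.rpow_nonneg (hx.trans hy).le _)),
    integral_Ioi_rpow_of_lt (by linarith) hx, sub_add_cancel, neg_div_neg_eq,
    ← ENNReal.ofReal_mul (by positivity), div_eq_inv_mul]

theorem sq_lintegral_Ioo_le {β x b : ℝ} (hβ : 0 < β) (hx : 0 < x) {f : ℝ → ℝ≥0∞}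
    (hf : AEMeasurable f (volume.restrict (Ioo x b))) :
    (∫⁻ y in Ioo x b, f y) ^ 2 ≤
      ENNReal.ofReal β⁻¹ * ENNReal.ofReal (x ^ (-β)) *
        ∫⁻ y in Ioo x b, ENNReal.ofReal (y ^ (β + 1)) * f y ^ 2 := by
  set a : ℝ := (β + 1) / 2
  have hpos : ∀ y ∈ Ioo x b, 0 < y := fun y hy => hx.trans hy.1
  -- Cauchy–Schwarz against the weight `y ^ (-β - 1)`, which is integrable at infinity.
  have hsplit : ∫⁻ y in Ioo x b, f y =
      ∫⁻ y in Ioo x b, ENNReal.ofReal (y ^ (-a)) * (ENNReal.ofReal (y ^ a) * f y) :=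
    setLIntegral_congr_fun measurableSet_Ioo fun y hy => by
      rw [← mul_assoc, ENNReal.ofReal_rpow_mul_ofReal_rpow (hpos y hy), neg_add_cancel,
        Real.rpow_zero, ENNReal.ofReal_one, one_mul]
  have hweight : ∫⁻ y in Ioo x b, ENNReal.ofReal (y ^ (-a)) ^ 2 ≤
      ENNReal.ofReal β⁻¹ * ENNReal.ofReal (x ^ (-β)) := by
    rw [← lintegral_Ioi_rpow_neg_sub_one hβ hx]
    calc ∫⁻ y in Ioo x b, ENNReal.ofReal (y ^ (-a)) ^ 2
        = ∫⁻ y in Ioo x b, ENNReal.ofReal (y ^ (-β - 1)) :=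
          setLIntegral_congr_fun measurableSet_Ioo fun y hy => by
            rw [ENNReal.ofReal_rpow_sq (hpos y hy), mul_neg, mul_div_cancel₀ _ two_ne_zero,
              neg_add']
      _ ≤ _ := lintegral_mono_set Ioo_subset_Ioi_self
  have hrest : ∫⁻ y in Ioo x b, (ENNReal.ofReal (y ^ a) * f y) ^ 2 =
      ∫⁻ y in Ioo x b, ENNReal.ofReal (y ^ (β + 1)) * f y ^ 2 :=
    setLIntegral_congr_fun measurableSet_Ioo fun y hy => by
      rw [mul_pow, ENNReal.ofReal_rpow_sq (hpos y hy), mul_div_cancel₀ _ two_ne_zero]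
  calc (∫⁻ y in Ioo x b, f y) ^ 2
      ≤ (∫⁻ y in Ioo x b, ENNReal.ofReal (y ^ (-a)) ^ 2) *
          ∫⁻ y in Ioo x b, (ENNReal.ofReal (y ^ a) * f y) ^ 2 := by
        rw [hsplit]
        exact ENNReal.lintegral_mul_sq_le (by fun_prop) (by fun_prop)
    _ ≤ _ := by rw [hrest]; gcongr

theorem lintegral_Ioo_mul_lintegral_Ioo_comm {a b : ℝ} {w g : ℝ → ℝ≥0∞}
    (hw : Measurable w) (hg : Measurable g) :
    ∫⁻ x in Ioo a b, w x * ∫⁻ y in Ioo x b, g y =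
      ∫⁻ y in Ioo a b, (∫⁻ x in Ioo a y, w x) * g y := by
  set F : ℝ → ℝ → ℝ≥0∞ := fun x y =>
    {p : ℝ × ℝ | p.1 < p.2}.indicator (fun p => w p.1 * g p.2) (x, y)
  have hF : Measurable (Function.uncurry F) :=
    ((hw.comp measurable_fst).mul (hg.comp measurable_snd)).indicator
      (measurableSet_lt measurable_fst measurable_snd)
  have hleft : ∀ x ∈ Ioo a b, w x * ∫⁻ y in Ioo x b, g y = ∫⁻ y in Ioo a b, F x y := by
    intro x hx
    change _ = ∫⁻ y in Ioo a b, (Ioi x).indicator (fun y => w x * g y) y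
    rw [lintegral_indicator measurableSet_Ioi, Measure.restrict_restrict measurableSet_Ioi,
      Ioi_inter_Ioo, max_eq_left hx.1.le, lintegral_const_mul _ hg]
  have hright : ∀ y ∈ Ioo a b, (∫⁻ x in Ioo a y, w x) * g y = ∫⁻ x in Ioo a b, F x y := by
    intro y hy
    change _ = ∫⁻ x in Ioo a b, (Iio y).indicator (fun x => w x * g y) x
    rw [lintegral_indicator measurableSet_Iio, Measure.restrict_restrict measurableSet_Iio,
      Iio_inter_Ioo, min_eq_left hy.2.le, lintegral_mul_const _ hw]
  calc ∫⁻ x in Ioo a b, w x * ∫⁻ y in Ioo x b, g y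
      = ∫⁻ x in Ioo a b, ∫⁻ y in Ioo a b, F x y := setLIntegral_congr_fun measurableSet_Ioo hleft
    _ = ∫⁻ y in Ioo a b, ∫⁻ x in Ioo a b, F x y := lintegral_lintegral_swap hF.aemeasurable
    _ = _ := (setLIntegral_congr_fun measurableSet_Ioo hright).symm

theorem lintegral_rpow_mul_sq_lintegral_Ioo_le {β b : ℝ} (hβ : 0 < β) {f : ℝ → ℝ≥0∞}
    (hf : Measurable f) :
    ∫⁻ x in Ioo 0 b, ENNReal.ofReal (x ^ (2 * β - 1)) * (∫⁻ y in Ioo x b, f y) ^ 2 ≤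
      ENNReal.ofReal ((β ^ 2)⁻¹) *
        ∫⁻ y in Ioo 0 b, ENNReal.ofReal (y ^ (2 * β + 1)) * f y ^ 2 := by
  set c := ENNReal.ofReal β⁻¹
  set G : ℝ → ℝ≥0∞ := fun y => ENNReal.ofReal (y ^ (β + 1)) * f y ^ 2
  have hc : ENNReal.ofReal ((β ^ 2)⁻¹) = c * c := by
    rw [← ENNReal.ofReal_mul (by positivity), sq, mul_inv]
  calc ∫⁻ x in Ioo 0 b, ENNReal.ofReal (x ^ (2 * β - 1)) * (∫⁻ y in Ioo x b, f y) ^ 2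
      ≤ ∫⁻ x in Ioo 0 b, c * (ENNReal.ofReal (x ^ (β - 1)) * ∫⁻ y in Ioo x b, G y) :=
        setLIntegral_mono' measurableSet_Ioo fun x hx => by
          calc _ ≤ ENNReal.ofReal (x ^ (2 * β - 1)) *
                (c * ENNReal.ofReal (x ^ (-β)) * ∫⁻ y in Ioo x b, G y) := by
                gcongr; exact sq_lintegral_Ioo_le hβ hx.1 hf.aemeasurable
            _ = c * (ENNReal.ofReal (x ^ (2 * β - 1)) * ENNReal.ofReal (x ^ (-β)) *
                  ∫⁻ y in Ioo x b, G y) := by ring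
            _ = _ := by
                rw [ENNReal.ofReal_rpow_mul_ofReal_rpow hx.1, show 2 * β - 1 + -β = β - 1 by ring]
    _ = c * ∫⁻ y in Ioo 0 b, (∫⁻ x in Ioo 0 y, ENNReal.ofReal (x ^ (β - 1))) * G y := by
        rw [lintegral_const_mul' _ _ ENNReal.ofReal_ne_top,
          lintegral_Ioo_mul_lintegral_Ioo_comm (by fun_prop) (by fun_prop)]
    _ = c * ∫⁻ y in Ioo 0 b, c * (ENNReal.ofReal (y ^ (2 * β + 1)) * f y ^ 2) := by
        congr 1
        refine setLIntegral_congr_fun measurableSet_Ioo fun y hy => ?_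
        rw [lintegral_Ioo_zero_rpow_sub_one hβ hy.1, mul_assoc,
          ← mul_assoc (ENNReal.ofReal (y ^ β)),
          ENNReal.ofReal_rpow_mul_ofReal_rpow hy.1, show β + (β + 1) = 2 * β + 1 by ring]
    _ = _ := by rw [lintegral_const_mul' _ _ ENNReal.ofReal_ne_top, ← mul_assoc, hc]

theorem hardy_inequality_general (α r : ℝ) (hαr : r < α)
    (φ : ℝ → ℝ) (hmeas : Measurable φ) :
    ∫⁻ x in Ioo (0:ℝ) 1,
        ENNReal.ofReal (x ^ (2*α - 2*r - 1)) *
          (∫⁻ y in Ioo x (1:ℝ), ENNReal.ofReal (y ^ (1 - α) * φ y)) ^ 2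
      ≤ ENNReal.ofReal (((α - r) ^ 2)⁻¹) *
          ∫⁻ x in Ioo (0:ℝ) 1, ENNReal.ofReal (x ^ (3 - 2*r) * φ x ^ 2) := by
  have hardy := lintegral_rpow_mul_sq_lintegral_Ioo_le (b := 1) (sub_pos.mpr hαr)
    (f := fun y => ENNReal.ofReal (y ^ (1 - α) * φ y)) (by fun_prop)
  rw [show 2 * (α - r) - 1 = 2 * α - 2 * r - 1 by ring] at hardy
  refine hardy.trans (mul_le_mul_right (setLIntegral_mono' measurableSet_Ioo fun y hy => ?_) _)
  have hy : 0 < y := hy.1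
  calc ENNReal.ofReal (y ^ (2 * (α - r) + 1)) * ENNReal.ofReal (y ^ (1 - α) * φ y) ^ 2
      = ENNReal.ofReal (y ^ (3 - 2 * r)) * ENNReal.ofReal (φ y) ^ 2 := by
        rw [ENNReal.ofReal_mul (by positivity), mul_pow, ENNReal.ofReal_rpow_sq hy, ← mul_assoc,
          ENNReal.ofReal_rpow_mul_ofReal_rpow hy,
          show 2 * (α - r) + 1 + 2 * (1 - α) = 3 - 2 * r by ring]
    _ ≤ ENNReal.ofReal (y ^ (3 - 2 * r)) * ENNReal.ofReal (φ y ^ 2) := by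
        gcongr; exact ENNReal.ofReal_sq_le _
    _ = ENNReal.ofReal (y ^ (3 - 2 * r) * φ y ^ 2) := (ENNReal.ofReal_mul (by positivity)).symm

/-- Hardy-type inequality: for `r ∈ {0,1}`, `α > r` and a nonnegative measurable `φ` with
`∫₀¹ x^{3−2r} φ(x)² dx < ∞`, one has
`∫₀¹ x^{2α−2r−1} (∫ₓ¹ y^{1−α} φ(y) dy)² dx ≤ (α−r)^{−2} ∫₀¹ x^{3−2r} φ(x)² dx`. -/
theorem hardy_inequality (α r : ℝ) (hr : r = 0 ∨ r = 1) (hαr : r < α)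
    (φ : ℝ → ℝ) (hmeas : Measurable φ) (hpos : ∀ x ∈ Ioo (0:ℝ) 1, 0 ≤ φ x)
    (hfin : ∫⁻ x in Ioo (0:ℝ) 1, ENNReal.ofReal (x ^ (3 - 2*r) * φ x ^ 2) < ⊤) :
    ∫⁻ x in Ioo (0:ℝ) 1,
        ENNReal.ofReal (x ^ (2*α - 2*r - 1)) *
          (∫⁻ y in Ioo x (1:ℝ), ENNReal.ofReal (y ^ (1 - α) * φ y)) ^ 2
      ≤ ENNReal.ofReal (((α - r) ^ 2)⁻¹) *
          ∫⁻ x in Ioo (0:ℝ) 1, ENNReal.ofReal (x ^ (3 - 2*r) * φ x ^ 2) :=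
  hardy_inequality_general α r hαr φ hmeas
end

section
/- Let α > 1 and let u : (0,1) → ℝ be differentiable with u ∈ L²_x and D_{x,α}u ∈ L²_x. Then u(x) = (A_α(D_{x,α}u))(x) for every x ∈ (0,1). -/
open MeasureTheory Set
open scoped ENNReal

/-- The integral operator `(A_α φ)(x) = x^{−α} ∫₀ˣ y^α φ(y) dy`. -/
noncomputable def Aa (α : ℝ) (φ : ℝ → ℝ) : ℝ → ℝ :=
  fun x => x ^ (-α) * ∫ y in Ioo (0:ℝ) x, y ^ α * φ y

/-- The integral operator `(A_α^* φ)(x) = x^{α−1} ∫ₓ¹ y^{1−α} φ(y) dy`. -/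
noncomputable def Astar (α : ℝ) (φ : ℝ → ℝ) : ℝ → ℝ :=
  fun x => x ^ (α - 1) * ∫ y in Ioo x (1:ℝ), y ^ (1 - α) * φ y

/-- The twisted derivative `D_{x,α} φ = φ' + (α/x) φ`. -/
noncomputable def Dtw (α : ℝ) (φ : ℝ → ℝ) : ℝ → ℝ :=
  fun x => deriv φ x + (α / x) * φ x

/-- The formal adjoint `D*_{x,α} φ = −φ' + ((α−1)/x) φ`. -/
noncomputable def Dstar (α : ℝ) (φ : ℝ → ℝ) : ℝ → ℝ :=
  fun x => -deriv φ x + ((α - 1) / x) * φ x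

/-- Membership in `L²_x = L²((0,1), x dx)`. -/
def MemL2x (φ : ℝ → ℝ) : Prop := IntegrableOn (fun x => φ x ^ 2 * x) (Ioo (0:ℝ) 1)

/-- The `L²_x` norm, `‖φ‖ = (∫₀¹ φ(x)² x dx)^{1/2}`. -/
noncomputable def L2xNorm (φ : ℝ → ℝ) : ℝ := Real.sqrt (∫ x in Ioo (0:ℝ) 1, φ x ^ 2 * x)

/-- The `L²_x` norm as an extended nonnegative real, `(∫₀¹ φ(x)² x dx)^{1/2}`. -/
noncomputable def eL2x (φ : ℝ → ℝ) : ℝ≥0∞ :=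
  (∫⁻ x in Ioo (0:ℝ) 1, ENNReal.ofReal (φ x ^ 2 * x)) ^ (1/2 : ℝ)

/-!
With `F y = y^α u(y)` one has `F' = y^α D_{x,α}u`, which is integrable on `(0,1)` by AM–GM
against `y^{2α-1}`. Hence `F` has a limit `C` at `0⁺` and `F x = C + ∫₀ˣ y^α D_{x,α}u`. If `C ≠ 0`
then `u(y)² y ≍ C² y^{1-2α}` near `0`, which is not integrable since `α ≥ 1`; so `C = 0`, i.e. the
homogeneous solution `C x^{-α}` is excluded.
-/

open Filter Topology Asymptotics

lemma aestronglyMeasurable_dtw {α : ℝ} {u : ℝ → ℝ} {s : Set ℝ} (hs : MeasurableSet s)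
    (hu : ContinuousOn u s) : AEStronglyMeasurable (Dtw α u) (volume.restrict s) :=
  (measurable_deriv u).aestronglyMeasurable.add
    ((measurable_const.div measurable_id).aestronglyMeasurable.mul (hu.aestronglyMeasurable hs))

lemma hasDerivAt_rpow_mul_dtw {α x : ℝ} {u : ℝ → ℝ} (hx : x ≠ 0) (hu : DifferentiableAt ℝ u x) :
    HasDerivAt (fun y => y ^ α * u y) (x ^ α * Dtw α u x) x := by
  refine ((Real.hasDerivAt_rpow_const (p := α) (Or.inl hx)).mul hu.hasDerivAt).congr_deriv ?_
  simp only [Dtw, Real.rpow_sub_one hx]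
  field_simp
  ring

lemma MemL2x.integrableOn_rpow_mul {α : ℝ} {φ : ℝ → ℝ} (hα : 0 < α) (hφ : MemL2x φ)
    (hm : AEStronglyMeasurable φ (volume.restrict (Ioo 0 1))) :
    IntegrableOn (fun y => y ^ α * φ y) (Ioo 0 1) := by
  have hpow : IntegrableOn (fun y : ℝ => y ^ (2 * α - 1)) (Ioo 0 1) :=
    (intervalIntegral.integrableOn_Ioo_rpow_iff one_pos).2 (by linarith)
  refine ((hpow.add hφ).div_const 2).mono'
    ((continuousOn_id.rpow_const fun y hy => Or.inl hy.1.ne').aestronglyMeasurable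
      measurableSet_Ioo |>.mul hm) ?_
  -- AM–GM: `y^α |φ y| = y^{α-1/2} · y^{1/2} |φ y| ≤ (y^{2α-1} + φ(y)² y) / 2`
  refine (ae_restrict_iff' measurableSet_Ioo).2 (ae_of_all _ fun y hy => ?_)
  have hy0 : 0 < y := hy.1
  have hsplit : y ^ α = y ^ (α - 1 / 2) * y ^ (1 / 2 : ℝ) := by
    rw [← Real.rpow_add hy0]; ring_nf
  have h1 : (y ^ (α - 1 / 2)) ^ 2 = y ^ (2 * α - 1) := by
    rw [← Real.rpow_natCast, ← Real.rpow_mul hy0.le]; ring_nf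
  have h2 : (y ^ (1 / 2 : ℝ)) ^ 2 = y := by
    rw [← Real.rpow_natCast, ← Real.rpow_mul hy0.le]; norm_num
  have := two_mul_le_add_sq (y ^ (α - 1 / 2)) (y ^ (1 / 2 : ℝ) * |φ y|)
  rw [Pi.add_apply, Real.norm_eq_abs, abs_mul, abs_of_pos (Real.rpow_pos_of_pos hy0 α), hsplit]
  rw [mul_pow, h1, h2, sq_abs] at this
  linarith

lemma not_integrableAtFilter_rpow_nhdsGT_zero {s : ℝ} (hs : s ≤ -1) :
    ¬ IntegrableAtFilter (fun x : ℝ => x ^ s) (𝓝[>] 0) := by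
  rintro ⟨t, ht, hint⟩
  obtain ⟨ε, hε, hsub⟩ := mem_nhdsGT_iff_exists_Ioo_subset.1 ht
  have := (intervalIntegral.integrableOn_Ioo_rpow_iff hε).1 (hint.mono_set hsub)
  linarith

lemma eq_zero_of_tendsto_rpow_mul {α C : ℝ} {u : ℝ → ℝ} (hα : 1 ≤ α)
    (hu : IntegrableAtFilter (fun x => u x ^ 2 * x) (𝓝[>] 0))
    (hlim : Tendsto (fun x => x ^ α * u x) (𝓝[>] 0) (𝓝 C)) : C = 0 := by
  by_contra hC
  -- `x^{1-2α} = (x^α u x)⁻² · u(x)² x`, and `(x^α u x)⁻²` stays bounded near `0`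
  have hlim2 := hlim.pow 2
  have hC2 : C ^ 2 ≠ 0 := pow_ne_zero 2 hC
  have hbigO : (fun x : ℝ => x ^ (1 - 2 * α)) =O[𝓝[>] 0] fun x => u x ^ 2 * x := by
    refine (((hlim2.inv₀ hC2).isBigO_one ℝ).mul (isBigO_refl _ _)).congr' ?_
      (Eventually.of_forall fun x => one_mul _)
    filter_upwards [self_mem_nhdsWithin, hlim2.eventually_ne hC2] with x (hx : 0 < x) hne
    have hux : u x ≠ 0 := right_ne_zero_of_mul (ne_zero_pow two_ne_zero hne)
    rw [Real.rpow_sub hx, Real.rpow_one, mul_comm 2 α, Real.rpow_mul hx.le, Real.rpow_two]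
    field_simp
  have hmeas : StronglyMeasurableAtFilter (fun x : ℝ => x ^ (1 - 2 * α)) (𝓝[>] 0) :=
    (continuousOn_id.rpow_const fun x (hx : 0 < x) => Or.inl hx.ne')
      |>.stronglyMeasurableAtFilter_nhdsWithin measurableSet_Ioi 0
  exact not_integrableAtFilter_rpow_nhdsGT_zero (by linarith) (hbigO.integrableAtFilter hmeas hu)

lemma tendsto_nhdsGT_of_hasDerivAt_of_integrableOn {F f : ℝ → ℝ} {a b : ℝ} (hab : a < b)
    (hF : ∀ x ∈ Ioc a b, HasDerivAt F (f x) x) (hf : IntegrableOn f (Ioc a b)) :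
    Tendsto F (𝓝[>] a) (𝓝 (F b - ∫ x in a..b, f x)) := by
  have hprim : ContinuousWithinAt (fun x => ∫ t in x..b, f t) (Ioi a) a := by
    have hIcc : IntegrableOn f (uIcc a b) := by
      rw [uIcc_of_le hab.le]
      exact (integrableOn_Icc_iff_integrableOn_Ioc (by finiteness)).2 hf
    refine (intervalIntegral.continuousOn_primitive_interval_left hIcc a
      left_mem_uIcc).mono_of_mem_nhdsWithin ?_
    rw [uIcc_of_le hab.le]
    exact mem_of_superset (Ioo_mem_nhdsGT hab) Ioo_subset_Icc_self
  refine ((tendsto_const_nhds (x := F b)).sub hprim).congr' ?_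
  filter_upwards [Ioo_mem_nhdsGT hab] with x hx
  have hsub : uIcc x b ⊆ Ioc a b := by
    rw [uIcc_of_le hx.2.le]
    exact Icc_subset_Ioc hx.1 le_rfl
  rw [intervalIntegral.integral_eq_sub_of_hasDerivAt (fun y hy => hF y (hsub hy))
    (hf.mono_set hsub).intervalIntegrable]
  ring

/-- For `α > 1` and `u` differentiable on `(0,1)` with `u ∈ L²_x` and `D_{x,α} u ∈ L²_x`,
one has `u = A_α(D_{x,α} u)` on `(0,1)`. -/
theorem repr_via_Aa (α : ℝ) (hα : 1 < α) (u : ℝ → ℝ)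
    (hdiff : ∀ x ∈ Ioo (0:ℝ) 1, DifferentiableAt ℝ u x)
    (hu : MemL2x u) (hDu : MemL2x (Dtw α u)) :
    ∀ x ∈ Ioo (0:ℝ) 1, u x = Aa α (Dtw α u) x := by
  intro x hx
  have hg : IntegrableOn (fun y => y ^ α * Dtw α u y) (Ioo 0 1) :=
    hDu.integrableOn_rpow_mul (by linarith) (aestronglyMeasurable_dtw measurableSet_Ioo
      fun y hy => (hdiff y hy).continuousAt.continuousWithinAt)
  have hlim := tendsto_nhdsGT_of_hasDerivAt_of_integrableOn hx.1
    (fun y hy => hasDerivAt_rpow_mul_dtw hy.1.ne' (hdiff y ⟨hy.1, hy.2.trans_lt hx.2⟩))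
    (hg.mono_set (Ioc_subset_Ioo_right hx.2))
  have hzero := eq_zero_of_tendsto_rpow_mul hα.le ⟨Ioo 0 1, Ioo_mem_nhdsGT one_pos, hu⟩ hlim
  rw [Aa, ← integral_Ioc_eq_integral_Ioo, ← intervalIntegral.integral_of_le hx.1.le,
    ← sub_eq_zero.1 hzero, ← mul_assoc, ← Real.rpow_add hx.1, neg_add_cancel, Real.rpow_zero,
    one_mul]
end

section
/- Let α > 1 and let u : (0,1) → ℝ be differentiable with u ∈ L²_x and D*_{x,α}u ∈ L²_x. Then there exists a real constant c such that u(x) = (A_α^*(D*_{x,α}u))(x) + c x^{α−1} for every x ∈ (0,1), and moreover |c| ≤ C (‖u‖_{L²_x} + ‖D*_{x,α}u‖_{L²_x}) for a constant C depending only on α. -/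
open MeasureTheory Set
open scoped ENNReal

/-!
Since `(x^{1-α} u)' = -x^{1-α} D*_{x,α} u`, the function `x^{1-α} u(x) - ∫ₓ¹ y^{1-α} D*_{x,α}u(y) dy`
is a constant `c` on `(0,1)`, which is the representation. To bound `c`, evaluate at a point
`x₀ ∈ (1/2, 1)` where `u(x₀)² x₀` is at most its mean over `(1/2, 1)` (first moment method), so
`|u(x₀)| ≤ 2‖u‖`; on `(1/2, 1)` the weights `y^{1-α}` are at most `2^{α-1}`, and the weight `x` is
bounded below, so AM-GM gives `∫_{1/2}^1 |D*_{x,α}u| ≤ 2‖D*_{x,α}u‖`.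
-/

lemma le_two_mul_of_forall_le_sq_div_add {a b : ℝ} (hb : 0 ≤ b)
    (h : ∀ s > 0, a ≤ b ^ 2 / s + s) : a ≤ 2 * b := by
  rcases hb.eq_or_lt with rfl | hb
  · simpa using le_of_forall_pos_le_add fun s hs => by simpa using h s hs
  · have := h b hb
    rw [sq, mul_div_cancel_right₀ _ hb.ne'] at this
    linarith

lemma rpow_one_sub_le_two_rpow {α y : ℝ} (hα : 1 ≤ α) (hy : 1 / 2 ≤ y) :
    y ^ (1 - α) ≤ 2 ^ (α - 1) := by
  have hy₀ : 0 < y := by linarith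
  rw [show 1 - α = -(α - 1) by ring, Real.rpow_neg hy₀.le, ← Real.inv_rpow hy₀.le]
  refine Real.rpow_le_rpow (inv_nonneg.2 hy₀.le) ?_ (by linarith)
  rw [inv_le_comm₀ hy₀ two_pos]
  linarith

lemma L2xNorm_nonneg (f : ℝ → ℝ) : 0 ≤ L2xNorm f := Real.sqrt_nonneg _

section MemL2x

variable {f : ℝ → ℝ}

lemma setIntegral_sq_mul_le_sq_L2xNorm (hf : MemL2x f) {s : Set ℝ} (hs : s ⊆ Ioo 0 1) :
    ∫ x in s, f x ^ 2 * x ≤ L2xNorm f ^ 2 := by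
  have hnonneg : ∀ x ∈ Ioo (0 : ℝ) 1, 0 ≤ f x ^ 2 * x := fun x hx =>
    mul_nonneg (sq_nonneg _) hx.1.le
  rw [L2xNorm, Real.sq_sqrt (setIntegral_nonneg measurableSet_Ioo hnonneg)]
  exact setIntegral_mono_set hf (ae_restrict_of_forall_mem measurableSet_Ioo hnonneg)
    (LE.le.eventuallyLE hs)

lemma MemL2x.exists_abs_le_two_mul_L2xNorm (hf : MemL2x f) :
    ∃ x₀ ∈ Ioo (1 / 2 : ℝ) 1, |f x₀| ≤ 2 * L2xNorm f := by
  have hsub : Ioo (1 / 2 : ℝ) 1 ⊆ Ioo 0 1 := Ioo_subset_Ioo (by norm_num) le_rfl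
  obtain ⟨x₀, hx₀, hle⟩ :=
    exists_le_setAverage (μ := volume) (by norm_num) (by simp) (hf.mono_set hsub)
  rw [setAverage_eq, Real.volume_real_Ioo, smul_eq_mul] at hle
  have hmean := setIntegral_sq_mul_le_sq_L2xNorm hf hsub
  refine ⟨x₀, hx₀, abs_le_of_sq_le_sq ?_ (by linarith [L2xNorm_nonneg f])⟩
  norm_num at hle
  nlinarith [hx₀.1, sq_nonneg (f x₀)]

lemma MemL2x.integrableOn_Icc (hf : MemL2x f)
    (hfm : AEStronglyMeasurable f (volume.restrict (Ioo 0 1))) {a : ℝ} (ha : 0 < a) :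
    IntegrableOn f (Icc a 1) := by
  have hsub : Ioo a 1 ⊆ Ioo 0 1 := Ioo_subset_Ioo ha.le le_rfl
  rw [integrableOn_Icc_iff_integrableOn_Ioo]
  have hone : IntegrableOn (fun _ => (1 : ℝ)) (Ioo a 1) := integrableOn_const (by simp)
  refine (((hf.mono_set hsub).const_mul a⁻¹).add hone).mono' (hfm.mono_set hsub) ?_
  filter_upwards [ae_restrict_mem measurableSet_Ioo] with y hy
  have hya : 1 ≤ a⁻¹ * y := by rw [inv_mul_eq_div, one_le_div ha]; exact hy.1.le
  have hsq : f y ^ 2 ≤ a⁻¹ * (f y ^ 2 * y) := by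
    nlinarith [sq_nonneg (f y)]
  rw [Real.norm_eq_abs, Pi.add_apply]
  nlinarith [sq_abs (f y), sq_nonneg (|f y| - 1), abs_nonneg (f y)]

lemma MemL2x.intervalIntegrable_rpow_mul (hf : MemL2x f)
    (hfm : AEStronglyMeasurable f (volume.restrict (Ioo 0 1))) (β : ℝ) {a b : ℝ}
    (ha : a ∈ Ioc (0 : ℝ) 1) (hb : b ∈ Ioc (0 : ℝ) 1) :
    IntervalIntegrable (fun y => y ^ β * f y) volume a b := by
  have hm : 0 < min a b := lt_min ha.1 hb.1
  have hcont : ContinuousOn (fun y : ℝ => y ^ β) (Icc (min a b) 1) := fun y hy =>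
    (Real.continuousAt_rpow_const y β (Or.inl (hm.trans_le hy.1).ne')).continuousWithinAt
  refine ((hf.integrableOn_Icc hfm hm).continuousOn_mul hcont isCompact_Icc).mono_set ?_
    |>.intervalIntegrable
  exact Icc_subset_Icc le_rfl (max_le ha.2 hb.2)

lemma MemL2x.setIntegral_abs_le_two_mul_L2xNorm (hf : MemL2x f) :
    ∫ y in Ioo (1 / 2 : ℝ) 1, |f y| ≤ 2 * L2xNorm f := by
  have hsub : Ioo (1 / 2 : ℝ) 1 ⊆ Ioo 0 1 := Ioo_subset_Ioo (by norm_num) le_rfl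
  refine le_two_mul_of_forall_le_sq_div_add (L2xNorm_nonneg f) fun s hs => ?_
  have hint : IntegrableOn (fun y => f y ^ 2 * y) (Ioo (1 / 2 : ℝ) 1) := hf.mono_set hsub
  calc ∫ y in Ioo (1 / 2 : ℝ) 1, |f y|
      ≤ ∫ y in Ioo (1 / 2 : ℝ) 1, (f y ^ 2 * y / s + s / 2) := by
        refine integral_mono_of_nonneg (ae_of_all _ fun _ => abs_nonneg _)
          ((hint.div_const s).add (integrableOn_const (by simp))) ?_
        filter_upwards [ae_restrict_mem measurableSet_Ioo] with y hy
        -- AM-GM: `2 s |f| ≤ f² + s² ≤ 2 f² y + s²` since `y > 1/2`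
        rw [div_add_div _ _ hs.ne' two_ne_zero, le_div_iff₀ (by positivity)]
        nlinarith [sq_abs (f y), sq_nonneg (|f y| - s), hy.1, sq_nonneg (f y)]
    _ = (∫ y in Ioo (1 / 2 : ℝ) 1, f y ^ 2 * y) / s + s / 4 := by
        rw [integral_add (hint.div_const s) (integrableOn_const (by simp)), integral_div,
          setIntegral_const, Real.volume_real_Ioo, smul_eq_mul]
        norm_num
        ring
    _ ≤ L2xNorm f ^ 2 / s + s := by
        gcongr
        · exact setIntegral_sq_mul_le_sq_L2xNorm hf hsub
        · linarith

end MemL2x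

lemma abs_setIntegral_rpow_mul_le {α x₀ : ℝ} {f : ℝ → ℝ} (hα : 1 ≤ α)
    (hf : IntegrableOn f (Ioo (1 / 2 : ℝ) 1)) (hx₀ : 1 / 2 ≤ x₀) :
    |∫ y in Ioo x₀ 1, y ^ (1 - α) * f y| ≤ 2 ^ (α - 1) * ∫ y in Ioo (1 / 2 : ℝ) 1, |f y| := by
  have hsub : Ioo x₀ 1 ⊆ Ioo (1 / 2 : ℝ) 1 := Ioo_subset_Ioo hx₀ le_rfl
  calc |∫ y in Ioo x₀ 1, y ^ (1 - α) * f y|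
      ≤ ∫ y in Ioo x₀ 1, |y ^ (1 - α) * f y| := abs_integral_le_integral_abs
    _ ≤ ∫ y in Ioo x₀ 1, 2 ^ (α - 1) * |f y| := by
        refine integral_mono_of_nonneg (ae_of_all _ fun _ => abs_nonneg _)
          ((hf.mono_set hsub).abs.const_mul _) ?_
        filter_upwards [ae_restrict_mem measurableSet_Ioo] with y hy
        have hy₀ : 0 < y := by linarith [hy.1]
        rw [abs_mul, abs_of_pos (Real.rpow_pos_of_pos hy₀ _)]
        exact mul_le_mul_of_nonneg_right (rpow_one_sub_le_two_rpow hα (by linarith [hy.1]))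
          (abs_nonneg _)
    _ ≤ ∫ y in Ioo (1 / 2 : ℝ) 1, 2 ^ (α - 1) * |f y| :=
        setIntegral_mono_set (hf.abs.const_mul _)
          (ae_of_all _ fun _ => by positivity) (LE.le.eventuallyLE hsub)
    _ = 2 ^ (α - 1) * ∫ y in Ioo (1 / 2 : ℝ) 1, |f y| := integral_const_mul _ _

section Dstar

variable {α : ℝ} {u : ℝ → ℝ}

lemma hasDerivAt_rpow_one_sub_mul {x : ℝ} (hx : 0 < x) (hu : DifferentiableAt ℝ u x) :
    HasDerivAt (fun y => y ^ (1 - α) * u y) (-(x ^ (1 - α) * Dstar α u x)) x := by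
  refine ((Real.hasDerivAt_rpow_const (p := 1 - α) (Or.inl hx.ne')).mul
    hu.hasDerivAt).congr_deriv ?_
  rw [Real.rpow_sub_one hx.ne', Dstar]
  field_simp
  ring

lemma aestronglyMeasurable_Dstar (hu : ∀ x ∈ Ioo (0 : ℝ) 1, DifferentiableAt ℝ u x) :
    AEStronglyMeasurable (Dstar α u) (volume.restrict (Ioo 0 1)) := by
  have hcont : ContinuousOn (fun x => (α - 1) / x * u x) (Ioo 0 1) :=
    (continuousOn_const.div continuousOn_id fun x hx => hx.1.ne').mul
      fun x hx => (hu x hx).continuousAt.continuousWithinAt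
  exact (measurable_deriv u).aestronglyMeasurable.neg.add
    (hcont.aestronglyMeasurable measurableSet_Ioo)

lemma rpow_mul_sub_setIntegral_eq (hu : ∀ x ∈ Ioo (0 : ℝ) 1, DifferentiableAt ℝ u x)
    (hf : MemL2x (Dstar α u)) {x x₀ : ℝ} (hx : x ∈ Ioo (0 : ℝ) 1) (hx₀ : x₀ ∈ Ioo (0 : ℝ) 1) :
    x ^ (1 - α) * u x - ∫ y in Ioo x 1, y ^ (1 - α) * Dstar α u y
      = x₀ ^ (1 - α) * u x₀ - ∫ y in Ioo x₀ 1, y ^ (1 - α) * Dstar α u y := by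
  have hint : ∀ {a b : ℝ}, a ∈ Ioc (0 : ℝ) 1 → b ∈ Ioc (0 : ℝ) 1 →
      IntervalIntegrable (fun y => y ^ (1 - α) * Dstar α u y) volume a b :=
    hf.intervalIntegrable_rpow_mul (aestronglyMeasurable_Dstar hu) (1 - α)
  have hderiv : ∀ t ∈ uIcc x x₀,
      HasDerivAt (fun y => y ^ (1 - α) * u y) (-(t ^ (1 - α) * Dstar α u t)) t := fun t ht =>
    have ht' := ordConnected_Ioo.uIcc_subset hx hx₀ ht
    hasDerivAt_rpow_one_sub_mul ht'.1 (hu t ht')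
  have hftc := intervalIntegral.integral_eq_sub_of_hasDerivAt hderiv
    (hint ⟨hx.1, hx.2.le⟩ ⟨hx₀.1, hx₀.2.le⟩).neg
  have hsplit := intervalIntegral.integral_add_adjacent_intervals
    (hint ⟨hx.1, hx.2.le⟩ ⟨hx₀.1, hx₀.2.le⟩) (hint ⟨hx₀.1, hx₀.2.le⟩ ⟨one_pos, le_rfl⟩)
  rw [intervalIntegral.integral_neg] at hftc
  simp only [← integral_Ioc_eq_integral_Ioo, ← intervalIntegral.integral_of_le hx.2.le,
    ← intervalIntegral.integral_of_le hx₀.2.le]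
  linarith

end Dstar

/-- For `α > 1` and `u` differentiable on `(0,1)` with `u ∈ L²_x` and `D*_{x,α} u ∈ L²_x`,
there is a constant `c` with `u = A_α^*(D*_{x,α} u) + c x^{α−1}` on `(0,1)` and
`|c| ≤ C(‖u‖ + ‖D*_{x,α} u‖)` for a constant `C` depending only on `α`. -/
theorem repr_via_Astar (α : ℝ) (hα : 1 < α) :
    ∃ C : ℝ, 0 < C ∧ ∀ u : ℝ → ℝ,
      (∀ x ∈ Ioo (0:ℝ) 1, DifferentiableAt ℝ u x) →
      MemL2x u → MemL2x (Dstar α u) →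
      ∃ c : ℝ,
        (∀ x ∈ Ioo (0:ℝ) 1, u x = Astar α (Dstar α u) x + c * x ^ (α - 1)) ∧
        |c| ≤ C * (L2xNorm u + L2xNorm (Dstar α u)) := by
  refine ⟨2 ^ α, by positivity, fun u hu huL2 hfL2 => ?_⟩
  obtain ⟨x₀, hx₀, hux₀⟩ := huL2.exists_abs_le_two_mul_L2xNorm
  have hx₀' : x₀ ∈ Ioo (0 : ℝ) 1 := ⟨by linarith [hx₀.1], hx₀.2⟩
  refine ⟨x₀ ^ (1 - α) * u x₀ - ∫ y in Ioo x₀ 1, y ^ (1 - α) * Dstar α u y, fun x hx => ?_, ?_⟩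
  · rw [← rpow_mul_sub_setIntegral_eq hu hfL2 hx hx₀', Astar]
    have hcancel : x ^ (α - 1) * x ^ (1 - α) = 1 := by
      rw [← Real.rpow_add hx.1]; simp
    linear_combination (-u x) * hcancel
  · have hint : IntegrableOn (Dstar α u) (Ioo (1 / 2 : ℝ) 1) :=
      (hfL2.integrableOn_Icc (aestronglyMeasurable_Dstar hu) one_half_pos).mono_set
        Ioo_subset_Icc_self
    have hux₀' : |x₀ ^ (1 - α) * u x₀| ≤ 2 ^ (α - 1) * (2 * L2xNorm u) := by
      rw [abs_mul, abs_of_pos (Real.rpow_pos_of_pos hx₀'.1 _)]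
      exact mul_le_mul (rpow_one_sub_le_two_rpow hα.le hx₀.1.le) hux₀ (abs_nonneg _)
        (by positivity)
    have hintegral := (abs_setIntegral_rpow_mul_le hα.le hint hx₀.1.le).trans
      (mul_le_mul_of_nonneg_left hfL2.setIntegral_abs_le_two_mul_L2xNorm (by positivity))
    calc _ ≤ _ := abs_sub _ _
      _ ≤ 2 ^ (α - 1) * (2 * L2xNorm u) + 2 ^ (α - 1) * (2 * L2xNorm (Dstar α u)) :=
          add_le_add hux₀' hintegral
      _ = 2 ^ α * (L2xNorm u + L2xNorm (Dstar α u)) := by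
          rw [Real.rpow_sub_one two_ne_zero]; ring
end

section
/- Let α > 1. Then there is a constant C, depending only on α, such that ‖x^{−2} A_α(A_α^* φ)‖_{L²_x} ≤ C ‖φ‖_{L²_x} for every φ ∈ L²_x. -/
/-!
Since `x⁻² A_α (A_α^* φ) = (x⁻¹ A_{α+1}) (x⁻¹ A_α^* φ)`, the operator is a composition of two
weighted Hardy operators on `L²_x`. Their kernels `x^{-(β+1)} y^β 1_{y<x}` and
`x^{β-2} y^{1-β} 1_{x<y}` are homogeneous of degree `-1`, so Schur's test with the test
function `1/x` bounds their norms by `1/(α+1)` and `1/(α-1)`; hence `C = 1/(α² - 1)` works.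
-/

open MeasureTheory Set
open scoped ENNReal

section SchurTest

variable {X Y : Type*} [MeasurableSpace X] [MeasurableSpace Y]

theorem lintegral_mul_sq_le_lintegral_mul_lintegral_mul_sq {ρ : Measure Y} {u g : Y → ℝ≥0∞}
    (hu : AEMeasurable u ρ) (hg : AEMeasurable g ρ) :
    (∫⁻ y, u y * g y ∂ρ) ^ 2 ≤ (∫⁻ y, u y ∂ρ) * ∫⁻ y, u y * g y ^ 2 ∂ρ := by
  have hsqrt : ∀ a : ℝ≥0∞, (a ^ (1 / 2 : ℝ)) ^ (2 : ℝ) = a := fun a => by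
    rw [← ENNReal.rpow_mul]; norm_num
  have hsplit : ∀ y, u y * g y = (u y ^ (1 / 2 : ℝ) * (u y ^ (1 / 2 : ℝ) * g y)) := fun y => by
    rw [← mul_assoc, ← ENNReal.rpow_add_of_nonneg _ _ (by norm_num) (by norm_num)]; norm_num
  have hCS := ENNReal.lintegral_mul_le_Lp_mul_Lq ρ Real.HolderConjugate.two_two
    (hu.pow_const (1 / 2 : ℝ)) ((hu.pow_const (1 / 2 : ℝ)).mul hg)
  simp only [Pi.mul_apply, ← hsplit, hsqrt, ENNReal.mul_rpow_of_nonneg _ _ zero_le_two] at hCS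
  calc (∫⁻ y, u y * g y ∂ρ) ^ 2
      ≤ ((∫⁻ y, u y ∂ρ) ^ (1 / 2 : ℝ) * (∫⁻ y, u y * g y ^ (2 : ℝ) ∂ρ) ^ (1 / 2 : ℝ)) ^ 2 :=
        pow_le_pow_left' hCS 2
    _ = (∫⁻ y, u y ∂ρ) * ∫⁻ y, u y * g y ^ 2 ∂ρ := by
        rw [mul_pow, ← ENNReal.rpow_two, ← ENNReal.rpow_two, hsqrt, hsqrt]
        simp_rw [ENNReal.rpow_two]

theorem lintegral_mul_sq_lintegral_le_of_schur_test {μ : Measure X} {ν : Measure Y}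
    [SFinite μ] [SFinite ν] {K : X → Y → ℝ≥0∞} (hK : Measurable (Function.uncurry K))
    {w p : X → ℝ≥0∞} {v q : Y → ℝ≥0∞} (hw : Measurable w) (hp : Measurable p)
    (hv : Measurable v) (hq : Measurable q) (hq_pos : ∀ᵐ y ∂ν, q y ≠ 0)
    (hq_fin : ∀ᵐ y ∂ν, q y ≠ ∞) {A B : ℝ≥0∞}
    (hA : ∀ᵐ x ∂μ, ∫⁻ y, K x y * q y ∂ν ≤ A * p x)
    (hB : ∀ᵐ y ∂ν, ∫⁻ x, K x y * (p x * w x) ∂μ ≤ B * (q y * v y))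
    {f : Y → ℝ≥0∞} (hf : Measurable f) :
    ∫⁻ x, w x * (∫⁻ y, K x y * f y ∂ν) ^ 2 ∂μ ≤ A * B * ∫⁻ y, v y * f y ^ 2 ∂ν := by
  set h : Y → ℝ≥0∞ := fun y => f y ^ 2 * (q y)⁻¹
  have hh : Measurable h := (hf.pow_const 2).mul hq.inv
  have hqq : ∀ᵐ y ∂ν, q y * (q y)⁻¹ = 1 := by
    filter_upwards [hq_pos, hq_fin] with y h0 htop using ENNReal.mul_inv_cancel h0 htop
  -- Cauchy–Schwarz against the weight `K x · q`, after writing `f = q · (f / q)`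
  have pointwise : ∀ᵐ x ∂μ, (∫⁻ y, K x y * f y ∂ν) ^ 2 ≤ A * p x * ∫⁻ y, K x y * h y ∂ν := by
    filter_upwards [hA] with x hx
    have hKx : Measurable (K x) := hK.of_uncurry_left
    have e1 : ∫⁻ y, K x y * f y ∂ν = ∫⁻ y, K x y * q y * (f y * (q y)⁻¹) ∂ν := by
      refine lintegral_congr_ae ?_
      filter_upwards [hqq] with y hy
      rw [mul_assoc, ← mul_assoc (q y), mul_comm (q y), mul_assoc, hy, mul_one]
    have e2 : ∫⁻ y, K x y * q y * (f y * (q y)⁻¹) ^ 2 ∂ν = ∫⁻ y, K x y * h y ∂ν := by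
      refine lintegral_congr_ae ?_
      filter_upwards [hqq] with y hy
      calc K x y * q y * (f y * (q y)⁻¹) ^ 2 = K x y * h y * (q y * (q y)⁻¹) := by ring
        _ = K x y * h y := by rw [hy, mul_one]
    rw [e1]
    calc _ ≤ (∫⁻ y, K x y * q y ∂ν) * ∫⁻ y, K x y * q y * (f y * (q y)⁻¹) ^ 2 ∂ν :=
          lintegral_mul_sq_le_lintegral_mul_lintegral_mul_sq (hKx.mul hq).aemeasurable
            (hf.mul hq.inv).aemeasurable
      _ ≤ A * p x * ∫⁻ y, K x y * h y ∂ν := by rw [e2]; gcongr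
  have hKh : Measurable (Function.uncurry fun x y => w x * p x * K x y * h y) := by
    fun_prop
  calc ∫⁻ x, w x * (∫⁻ y, K x y * f y ∂ν) ^ 2 ∂μ
      ≤ ∫⁻ x, w x * (A * p x * ∫⁻ y, K x y * h y ∂ν) ∂μ := by
        refine lintegral_mono_ae ?_
        filter_upwards [pointwise] with x hx using by gcongr
    _ = A * ∫⁻ x, ∫⁻ y, w x * p x * K x y * h y ∂ν ∂μ := by
        have hI : Measurable fun x => ∫⁻ y, w x * p x * K x y * h y ∂ν :=
          hKh.lintegral_prod_right'
        rw [← lintegral_const_mul _ hI]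
        refine lintegral_congr fun x => ?_
        simp_rw [mul_assoc (w x * p x)]
        have hKhx : Measurable fun y => K x y * h y := hK.of_uncurry_left.mul hh
        rw [lintegral_const_mul _ hKhx]
        ring
    _ = A * ∫⁻ y, h y * ∫⁻ x, K x y * (p x * w x) ∂μ ∂ν := by
        rw [lintegral_lintegral_swap hKh.aemeasurable]
        congr 1
        refine lintegral_congr fun y => ?_
        rw [← lintegral_const_mul _ (by fun_prop)]
        refine lintegral_congr fun x => ?_
        ring
    _ ≤ A * ∫⁻ y, h y * (B * (q y * v y)) ∂ν := by
        gcongr 1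
        refine lintegral_mono_ae ?_
        filter_upwards [hB] with y hy using by gcongr
    _ = A * B * ∫⁻ y, v y * f y ^ 2 ∂ν := by
        rw [mul_assoc, ← lintegral_const_mul _ (by fun_prop : Measurable fun y => v y * f y ^ 2)]
        congr 1
        refine lintegral_congr_ae ?_
        filter_upwards [hqq] with y hy
        calc h y * (B * (q y * v y)) = B * (v y * f y ^ 2) * (q y * (q y)⁻¹) := by ring
          _ = B * (v y * f y ^ 2) := by rw [hy, mul_one]

end SchurTest

theorem ENNReal.ofReal_rpow_neg_one_mul_ofReal {x : ℝ} (hx : 0 < x) :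
    ENNReal.ofReal (x ^ (-1 : ℝ)) * ENNReal.ofReal x = 1 := by
  rw [← ENNReal.ofReal_mul (by positivity), Real.rpow_neg_one, inv_mul_cancel₀ hx.ne',
    ENNReal.ofReal_one]

theorem lintegral_Ioo_zero_rpow {p : ℝ} (hp : -1 < p) {x : ℝ} (hx : 0 ≤ x) :
    ∫⁻ y in Ioo 0 x, ENNReal.ofReal (y ^ p) = ENNReal.ofReal (x ^ (p + 1) / (p + 1)) := by
  rw [Measure.restrict_congr_set Ioo_ae_eq_Ioc,
    ← ofReal_integral_eq_lintegral_ofReal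
      ((intervalIntegrable_iff_integrableOn_Ioc_of_le hx).mp
        (intervalIntegral.intervalIntegrable_rpow' hp))]
  · rw [← intervalIntegral.integral_of_le hx, integral_rpow (Or.inl hp),
      Real.zero_rpow (by linarith), sub_zero]
  · filter_upwards [self_mem_ae_restrict measurableSet_Ioc] with y hy
    exact Real.rpow_nonneg hy.1.le p

theorem lintegral_Ioo_rpow_le_of_lt_neg_one {p : ℝ} (hp : p < -1) {x : ℝ} (hx : 0 < x) (b : ℝ) :
    ∫⁻ y in Ioo x b, ENNReal.ofReal (y ^ p) ≤ ENNReal.ofReal (-x ^ (p + 1) / (p + 1)) := by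
  calc ∫⁻ y in Ioo x b, ENNReal.ofReal (y ^ p)
      ≤ ∫⁻ y in Ioi x, ENNReal.ofReal (y ^ p) := lintegral_mono_set Ioo_subset_Ioi_self
    _ = ENNReal.ofReal (-x ^ (p + 1) / (p + 1)) := by
        rw [← ofReal_integral_eq_lintegral_ofReal (integrableOn_Ioi_rpow_of_lt hp hx),
          integral_Ioi_rpow_of_lt hp hx]
        filter_upwards [self_mem_ae_restrict measurableSet_Ioi] with y hy
        exact Real.rpow_nonneg (hx.trans hy).le p

theorem setLIntegral_Ioo_indicator_Iio_mul {x : ℝ} (hx : x ≤ 1) (g h : ℝ → ℝ≥0∞) :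
    ∫⁻ y in Ioo 0 1, (Iio x).indicator g y * h y = ∫⁻ y in Ioo 0 x, g y * h y := by
  simp_rw [← indicator_mul_left]
  rw [setLIntegral_indicator measurableSet_Iio, Iio_inter_Ioo, min_eq_left hx]

theorem setLIntegral_Ioo_indicator_Ioi_mul {x : ℝ} (hx : 0 ≤ x) (g h : ℝ → ℝ≥0∞) :
    ∫⁻ y in Ioo 0 1, (Ioi x).indicator g y * h y = ∫⁻ y in Ioo x 1, g y * h y := by
  simp_rw [← indicator_mul_left]
  rw [setLIntegral_indicator measurableSet_Ioi]
  congr 2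
  ext y
  simp only [mem_inter_iff, mem_Ioo, mem_Ioi]
  constructor
  · rintro ⟨hxy, -, hy1⟩; exact ⟨hxy, hy1⟩
  · rintro ⟨hxy, hy1⟩; exact ⟨hxy, hx.trans_lt hxy, hy1⟩

theorem ofReal_abs_setIntegral_mul_le {X : Type*} [MeasurableSpace X] {μ : Measure X}
    {s : Set X} (hs : MeasurableSet s) {k g : X → ℝ} (hk : ∀ z ∈ s, 0 ≤ k z) :
    ENNReal.ofReal |∫ z in s, k z * g z ∂μ|
      ≤ ∫⁻ z in s, ENNReal.ofReal (k z) * ENNReal.ofReal |g z| ∂μ := by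
  rw [← Real.enorm_eq_ofReal_abs]
  refine (enorm_integral_le_lintegral_enorm _).trans_eq (setLIntegral_congr_fun hs fun z hz => ?_)
  rw [Real.enorm_eq_ofReal_abs, abs_mul, abs_of_nonneg (hk z hz), ENNReal.ofReal_mul (hk z hz)]

-- `hardyKernel β` and `dualHardyKernel β` are the kernels of `x⁻¹ A_β` and `x⁻¹ A_β^*`.
noncomputable def hardyKernel (β x : ℝ) : ℝ → ℝ≥0∞ :=
  (Iio x).indicator fun y => ENNReal.ofReal (x ^ (-(β + 1)) * y ^ β)

noncomputable def dualHardyKernel (β x : ℝ) : ℝ → ℝ≥0∞ :=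
  (Ioi x).indicator fun z => ENNReal.ofReal (x ^ (β - 2) * z ^ (1 - β))

theorem hardyKernel_eq_indicator (β x y : ℝ) :
    hardyKernel β x y = (Ioi y).indicator (fun x => ENNReal.ofReal (x ^ (-(β + 1)) * y ^ β)) x := by
  simp only [hardyKernel, indicator_apply, mem_Iio, mem_Ioi]

theorem dualHardyKernel_eq_indicator (β x z : ℝ) :
    dualHardyKernel β x z
      = (Iio z).indicator (fun x => ENNReal.ofReal (x ^ (β - 2) * z ^ (1 - β))) x := by
  simp only [dualHardyKernel, indicator_apply, mem_Iio, mem_Ioi]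

theorem measurable_hardyKernel (β : ℝ) : Measurable (Function.uncurry (hardyKernel β)) := by
  have : Function.uncurry (hardyKernel β) = {p : ℝ × ℝ | p.2 < p.1}.indicator
      fun p => ENNReal.ofReal (p.1 ^ (-(β + 1)) * p.2 ^ β) := by
    ext ⟨x, y⟩
    simp only [Function.uncurry_apply_pair, hardyKernel, indicator_apply, mem_Iio, mem_ofPred_eq]
  rw [this]
  exact (by fun_prop : Measurable _).indicator (measurableSet_lt measurable_snd measurable_fst)

theorem measurable_dualHardyKernel (β : ℝ) : Measurable (Function.uncurry (dualHardyKernel β)) := by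
  have : Function.uncurry (dualHardyKernel β) = {p : ℝ × ℝ | p.1 < p.2}.indicator
      fun p => ENNReal.ofReal (p.1 ^ (β - 2) * p.2 ^ (1 - β)) := by
    ext ⟨x, y⟩
    simp only [Function.uncurry_apply_pair, dualHardyKernel, indicator_apply, mem_Ioi,
      mem_ofPred_eq]
  rw [this]
  exact (by fun_prop : Measurable _).indicator (measurableSet_lt measurable_fst measurable_snd)

theorem lintegral_hardyKernel_row {β : ℝ} (hβ : 0 < β) {x : ℝ} (hx : x ∈ Ioo 0 1) :
    ∫⁻ y in Ioo 0 1, hardyKernel β x y * ENNReal.ofReal (y ^ (-1 : ℝ))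
      = ENNReal.ofReal β⁻¹ * ENNReal.ofReal (x ^ (-1 : ℝ)) := by
  have hx0 := hx.1
  rw [hardyKernel, setLIntegral_Ioo_indicator_Iio_mul hx.2.le]
  calc ∫⁻ y in Ioo 0 x, ENNReal.ofReal (x ^ (-(β + 1)) * y ^ β) * ENNReal.ofReal (y ^ (-1 : ℝ))
      = ∫⁻ y in Ioo 0 x, ENNReal.ofReal (x ^ (-(β + 1))) * ENNReal.ofReal (y ^ (β - 1)) := by
        refine setLIntegral_congr_fun measurableSet_Ioo fun y hy => ?_
        rw [ENNReal.ofReal_mul (by positivity), mul_assoc,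
          ENNReal.ofReal_rpow_mul_ofReal_rpow hy.1, sub_eq_add_neg]
    _ = ENNReal.ofReal (x ^ (-(β + 1))) * ENNReal.ofReal (x ^ β / β) := by
        rw [lintegral_const_mul' _ _ ENNReal.ofReal_ne_top,
          lintegral_Ioo_zero_rpow (by linarith) hx0.le, sub_add_cancel]
    _ = ENNReal.ofReal β⁻¹ * ENNReal.ofReal (x ^ (-1 : ℝ)) := by
        rw [div_eq_mul_inv, ENNReal.ofReal_mul (by positivity), ← mul_assoc,
          ENNReal.ofReal_rpow_mul_ofReal_rpow hx0, mul_comm]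
        ring_nf

theorem lintegral_hardyKernel_col_le {β : ℝ} (hβ : 0 < β) {y : ℝ} (hy : y ∈ Ioo 0 1) :
    ∫⁻ x in Ioo 0 1, hardyKernel β x y * (ENNReal.ofReal (x ^ (-1 : ℝ)) * ENNReal.ofReal x)
      ≤ ENNReal.ofReal β⁻¹ * (ENNReal.ofReal (y ^ (-1 : ℝ)) * ENNReal.ofReal y) := by
  have hy0 := hy.1
  simp_rw [hardyKernel_eq_indicator]
  rw [setLIntegral_Ioo_indicator_Ioi_mul hy0.le, ENNReal.ofReal_rpow_neg_one_mul_ofReal hy0,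
    mul_one]
  calc ∫⁻ x in Ioo y 1, ENNReal.ofReal (x ^ (-(β + 1)) * y ^ β)
        * (ENNReal.ofReal (x ^ (-1 : ℝ)) * ENNReal.ofReal x)
      = ∫⁻ x in Ioo y 1, ENNReal.ofReal (y ^ β) * ENNReal.ofReal (x ^ (-(β + 1))) := by
        refine setLIntegral_congr_fun measurableSet_Ioo fun x hx => ?_
        have hx0 := hy0.trans hx.1
        rw [ENNReal.ofReal_rpow_neg_one_mul_ofReal hx0, mul_one,
          ENNReal.ofReal_mul (by positivity), mul_comm]
    _ ≤ ENNReal.ofReal (y ^ β) * ENNReal.ofReal (-y ^ (-(β + 1) + 1) / (-(β + 1) + 1)) := by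
        rw [lintegral_const_mul' _ _ ENNReal.ofReal_ne_top]
        gcongr
        exact lintegral_Ioo_rpow_le_of_lt_neg_one (by linarith) hy0 1
    _ = ENNReal.ofReal β⁻¹ := by
        rw [← ENNReal.ofReal_mul (by positivity), show -(β + 1) + 1 = -β by ring,
          Real.rpow_neg hy0.le]
        congr 1
        field_simp

theorem lintegral_dualHardyKernel_row_le {β : ℝ} (hβ : 1 < β) {x : ℝ}
    (hx : x ∈ Ioo 0 1) :
    ∫⁻ z in Ioo 0 1, dualHardyKernel β x z * ENNReal.ofReal (z ^ (-1 : ℝ))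
      ≤ ENNReal.ofReal (β - 1)⁻¹ * ENNReal.ofReal (x ^ (-1 : ℝ)) := by
  have hx0 := hx.1
  rw [dualHardyKernel, setLIntegral_Ioo_indicator_Ioi_mul hx0.le]
  calc ∫⁻ z in Ioo x 1, ENNReal.ofReal (x ^ (β - 2) * z ^ (1 - β)) * ENNReal.ofReal (z ^ (-1 : ℝ))
      = ∫⁻ z in Ioo x 1, ENNReal.ofReal (x ^ (β - 2)) * ENNReal.ofReal (z ^ (-β)) := by
        refine setLIntegral_congr_fun measurableSet_Ioo fun z hz => ?_
        rw [ENNReal.ofReal_mul (by positivity), mul_assoc,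
          ENNReal.ofReal_rpow_mul_ofReal_rpow (hx0.trans hz.1)]
        ring_nf
    _ ≤ ENNReal.ofReal (x ^ (β - 2)) * ENNReal.ofReal (-x ^ (-β + 1) / (-β + 1)) := by
        rw [lintegral_const_mul' _ _ ENNReal.ofReal_ne_top]
        gcongr
        exact lintegral_Ioo_rpow_le_of_lt_neg_one (by linarith) hx0 1
    _ = ENNReal.ofReal (β - 1)⁻¹ * ENNReal.ofReal (x ^ (-1 : ℝ)) := by
        have hβ1 : 0 < β - 1 := by linarith
        rw [neg_div, ← div_neg, neg_add, neg_neg, ← sub_eq_neg_add, div_eq_mul_inv,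
          ENNReal.ofReal_mul (by positivity), ← mul_assoc,
          ENNReal.ofReal_rpow_mul_ofReal_rpow hx0, mul_comm]
        ring_nf

theorem lintegral_dualHardyKernel_col {β : ℝ} (hβ : 1 < β) {z : ℝ} (hz : z ∈ Ioo 0 1) :
    ∫⁻ x in Ioo 0 1, dualHardyKernel β x z * (ENNReal.ofReal (x ^ (-1 : ℝ)) * ENNReal.ofReal x)
      = ENNReal.ofReal (β - 1)⁻¹ * (ENNReal.ofReal (z ^ (-1 : ℝ)) * ENNReal.ofReal z) := by
  have hz0 := hz.1
  simp_rw [dualHardyKernel_eq_indicator]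
  rw [setLIntegral_Ioo_indicator_Iio_mul hz.2.le, ENNReal.ofReal_rpow_neg_one_mul_ofReal hz0,
    mul_one]
  calc ∫⁻ x in Ioo 0 z, ENNReal.ofReal (x ^ (β - 2) * z ^ (1 - β))
        * (ENNReal.ofReal (x ^ (-1 : ℝ)) * ENNReal.ofReal x)
      = ∫⁻ x in Ioo 0 z, ENNReal.ofReal (z ^ (1 - β)) * ENNReal.ofReal (x ^ (β - 2)) := by
        refine setLIntegral_congr_fun measurableSet_Ioo fun x hx => ?_
        have hx0 := hx.1
        rw [ENNReal.ofReal_rpow_neg_one_mul_ofReal hx0, mul_one,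
          ENNReal.ofReal_mul (by positivity), mul_comm]
    _ = ENNReal.ofReal (z ^ (1 - β)) * ENNReal.ofReal (z ^ (β - 2 + 1) / (β - 2 + 1)) := by
        rw [lintegral_const_mul' _ _ ENNReal.ofReal_ne_top,
          lintegral_Ioo_zero_rpow (by linarith) hz0.le]
    _ = ENNReal.ofReal (β - 1)⁻¹ := by
        have hβ1 : 0 < β - 1 := by linarith
        rw [← ENNReal.ofReal_mul (by positivity), show β - 2 + 1 = β - 1 by ring, mul_div_assoc',
          ← Real.rpow_add hz0, show 1 - β + (β - 1) = 0 by ring, Real.rpow_zero, one_div]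

theorem lintegral_mul_sq_lintegral_hardyKernel_le {β : ℝ} (hβ : 0 < β) {f : ℝ → ℝ≥0∞}
    (hf : Measurable f) :
    ∫⁻ x in Ioo 0 1, ENNReal.ofReal x * (∫⁻ y in Ioo 0 1, hardyKernel β x y * f y) ^ 2
      ≤ ENNReal.ofReal β⁻¹ ^ 2 * ∫⁻ y in Ioo 0 1, ENNReal.ofReal y * f y ^ 2 :=
  (lintegral_mul_sq_lintegral_le_of_schur_test (measurable_hardyKernel β) (by fun_prop)
    (by fun_prop) (by fun_prop) (by fun_prop)
    (ae_restrict_of_forall_mem measurableSet_Ioo fun y hy =>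
      (ENNReal.ofReal_pos.mpr (Real.rpow_pos_of_pos hy.1 _)).ne')
    (ae_of_all _ fun _ => ENNReal.ofReal_ne_top)
    (ae_restrict_of_forall_mem measurableSet_Ioo fun x hx =>
      (lintegral_hardyKernel_row hβ hx).le)
    (ae_restrict_of_forall_mem measurableSet_Ioo fun y hy => lintegral_hardyKernel_col_le hβ hy)
    hf).trans_eq (by rw [sq])

theorem lintegral_mul_sq_lintegral_dualHardyKernel_le {β : ℝ} (hβ : 1 < β) {f : ℝ → ℝ≥0∞}
    (hf : Measurable f) :
    ∫⁻ x in Ioo 0 1, ENNReal.ofReal x * (∫⁻ z in Ioo 0 1, dualHardyKernel β x z * f z) ^ 2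
      ≤ ENNReal.ofReal (β - 1)⁻¹ ^ 2 * ∫⁻ z in Ioo 0 1, ENNReal.ofReal z * f z ^ 2 :=
  (lintegral_mul_sq_lintegral_le_of_schur_test (measurable_dualHardyKernel β) (by fun_prop)
    (by fun_prop) (by fun_prop) (by fun_prop)
    (ae_restrict_of_forall_mem measurableSet_Ioo fun z hz =>
      (ENNReal.ofReal_pos.mpr (Real.rpow_pos_of_pos hz.1 _)).ne')
    (ae_of_all _ fun _ => ENNReal.ofReal_ne_top)
    (ae_restrict_of_forall_mem measurableSet_Ioo fun x hx =>
      lintegral_dualHardyKernel_row_le hβ hx)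
    (ae_restrict_of_forall_mem measurableSet_Ioo fun z hz =>
      (lintegral_dualHardyKernel_col hβ hz).le) hf).trans_eq (by rw [sq])

theorem ofReal_abs_inv_mul_Astar_le (β : ℝ) (φ : ℝ → ℝ) {y : ℝ} (hy : y ∈ Ioo 0 1) :
    ENNReal.ofReal |y⁻¹ * Astar β φ y|
      ≤ ∫⁻ z in Ioo 0 1, dualHardyKernel β y z * ENNReal.ofReal |φ z| := by
  have hy0 := hy.1
  have e : y⁻¹ * Astar β φ y = ∫ z in Ioo y 1, (y ^ (β - 2) * z ^ (1 - β)) * φ z := by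
    have hpow : y⁻¹ * y ^ (β - 1) = y ^ (β - 2) := by
      rw [← Real.rpow_neg_one, ← Real.rpow_add hy0]; ring_nf
    simp_rw [Astar, ← mul_assoc, hpow, mul_assoc (y ^ (β - 2)), integral_const_mul]
  rw [e, dualHardyKernel, setLIntegral_Ioo_indicator_Ioi_mul hy0.le]
  exact ofReal_abs_setIntegral_mul_le measurableSet_Ioo fun z hz =>
    mul_nonneg (Real.rpow_nonneg hy0.le _) (Real.rpow_nonneg (hy0.trans hz.1).le _)

theorem ofReal_abs_Aa_div_sq_le (β : ℝ) (ψ : ℝ → ℝ) {x : ℝ} (hx : x ∈ Ioo 0 1) :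
    ENNReal.ofReal |Aa β ψ x / x ^ 2|
      ≤ ∫⁻ y in Ioo 0 1, hardyKernel (β + 1) x y * ENNReal.ofReal |y⁻¹ * ψ y| := by
  have hx0 := hx.1
  have e : Aa β ψ x / x ^ 2
      = ∫ y in Ioo 0 x, (x ^ (-(β + 1 + 1)) * y ^ (β + 1)) * (y⁻¹ * ψ y) := by
    have hpow : x ^ (-β) / x ^ 2 = x ^ (-(β + 1 + 1)) := by
      rw [show -(β + 1 + 1) = -β - 2 by ring, Real.rpow_sub hx0, Real.rpow_two]
    rw [Aa, mul_div_right_comm, hpow, ← integral_const_mul]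
    refine setIntegral_congr_fun measurableSet_Ioo fun y hy => ?_
    have hy0 := hy.1.ne'
    rw [Real.rpow_add_one hy0]
    field_simp
  rw [e, hardyKernel, setLIntegral_Ioo_indicator_Iio_mul hx.2.le]
  exact ofReal_abs_setIntegral_mul_le measurableSet_Ioo fun y hy =>
    mul_nonneg (Real.rpow_nonneg hx0.le _) (Real.rpow_nonneg hy.1.le _)

theorem sq_eL2x (g : ℝ → ℝ) :
    eL2x g ^ 2 = ∫⁻ x in Ioo 0 1, ENNReal.ofReal x * ENNReal.ofReal |g x| ^ 2 := by
  rw [eL2x, ← ENNReal.rpow_natCast, ← ENNReal.rpow_mul]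
  norm_num
  refine lintegral_congr fun x => ?_
  rw [ENNReal.ofReal_mul (sq_nonneg _), ← ENNReal.ofReal_pow (abs_nonneg _), sq_abs, mul_comm]

/-- For `α > 1` there is `C = C(α) > 0` with `‖x^{−2} A_α(A_α^* φ)‖_{L²_x} ≤ C ‖φ‖_{L²_x}`
for every `φ ∈ L²_x`. -/
theorem AAstar_bound (α : ℝ) (hα : 1 < α) :
    ∃ C : ℝ, 0 < C ∧ ∀ φ : ℝ → ℝ, Measurable φ → eL2x φ < ⊤ →
      eL2x (fun x => Aa α (Astar α φ) x / x ^ 2) ≤ ENNReal.ofReal C * eL2x φ := by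
  have hα0 : 0 < α + 1 := by linarith
  have hα1 : 0 < α - 1 := by linarith
  refine ⟨(α + 1)⁻¹ * (α - 1)⁻¹, by positivity, fun φ hφ _ => ?_⟩
  set G : ℝ → ℝ≥0∞ := fun y => ∫⁻ z in Ioo 0 1, dualHardyKernel α y z * ENNReal.ofReal |φ z|
  have hG : Measurable G := Measurable.lintegral_prod_right'
    (f := fun p : ℝ × ℝ => dualHardyKernel α p.1 p.2 * ENNReal.ofReal |φ p.2|)
    ((measurable_dualHardyKernel α).mul (by fun_prop))
  rw [← ENNReal.pow_le_pow_left_iff two_ne_zero, mul_pow, sq_eL2x, sq_eL2x]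
  calc ∫⁻ x in Ioo 0 1, ENNReal.ofReal x * ENNReal.ofReal |Aa α (Astar α φ) x / x ^ 2| ^ 2
      ≤ ∫⁻ x in Ioo 0 1, ENNReal.ofReal x * (∫⁻ y in Ioo 0 1, hardyKernel (α + 1) x y * G y) ^ 2 :=
        setLIntegral_mono' measurableSet_Ioo fun x hx => by
          gcongr
          refine (ofReal_abs_Aa_div_sq_le α _ hx).trans
            (setLIntegral_mono' measurableSet_Ioo fun y hy => ?_)
          gcongr
          exact ofReal_abs_inv_mul_Astar_le α φ hy
    _ ≤ ENNReal.ofReal (α + 1)⁻¹ ^ 2 * ∫⁻ y in Ioo 0 1, ENNReal.ofReal y * G y ^ 2 :=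
        lintegral_mul_sq_lintegral_hardyKernel_le hα0 hG
    _ ≤ ENNReal.ofReal (α + 1)⁻¹ ^ 2 * (ENNReal.ofReal (α - 1)⁻¹ ^ 2
          * ∫⁻ z in Ioo 0 1, ENNReal.ofReal z * ENNReal.ofReal |φ z| ^ 2) := by
        gcongr
        exact lintegral_mul_sq_lintegral_dualHardyKernel_le hα (by fun_prop)
    _ = ENNReal.ofReal ((α + 1)⁻¹ * (α - 1)⁻¹) ^ 2
          * ∫⁻ z in Ioo 0 1, ENNReal.ofReal z * ENNReal.ofReal |φ z| ^ 2 := by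
        rw [ENNReal.ofReal_mul (by positivity)]
        ring
end

section
/- Let n ≥ 2 be an integer, let V be a real vector space of dimension n+1, let ḡ be a nondegenerate symmetric bilinear form on V, and let ξ ∈ V* be a covector whose ḡ-dual vector X ∈ V (defined by ḡ(X,·) = ξ) satisfies ξ(X) = 1. Define the following subspaces of the space Sym²(V*) of symmetric bilinear forms on V: V₀ := { φ ḡ : φ ∈ ℝ }; V₁ := { H ∈ Sym²(V*) : H(X,·) = 0 and tr_ḡ H = 0 }, where tr_ḡ H denotes the trace of the endomorphism of V obtained by raising one index of H with ḡ; V₂ := { φ ( (n+1) ξ⊗ξ − ḡ ) : φ ∈ ℝ }; V₃ := { a⊗ξ + ξ⊗a : a ∈ V*, a(X) = 0 }. Then Sym²(V*) is the internal direct sum V₀ ⊕ V₁ ⊕ V₂ ⊕ V₃, and the dimensions of these subspaces are 1, n(n+1)/2 − 1, 1 and n respectively. -/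
/-! Evaluation at `X` and the `ḡ`-trace detect the components: if
`H = c ḡ + H₁ + d ((n+1) ξ⊗ξ - ḡ) + (a⊗ξ + ξ⊗a)` with `H₁ ∈ V₁` and `a(X) = 0`, then
`H(X, ·) = (c + n d) ξ + a` and `tr_ḡ H = (n+1) c`, which determines `c`, `d`, `a` and hence `H₁`.
Conversely these formulas produce the decomposition of any symmetric `H`, and `dim V₁` is read
off from `dim Sym²(V*) = (n+1)(n+2)/2`. -/

variable {V : Type*}

/-- The symmetrized tensor product `a ↦ a ⊗ ξ + ξ ⊗ a`, as a linear map from the dual of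
`V` into bilinear forms on `V`. -/
noncomputable def symT [AddCommGroup V] [Module ℝ V] (ξ : Module.Dual ℝ V) :
    Module.Dual ℝ V →ₗ[ℝ] (V →ₗ[ℝ] V →ₗ[ℝ] ℝ) where
  toFun a := a.smulRight ξ + ξ.smulRight a
  map_add' a b := by
    ext v w
    simp only [LinearMap.add_apply, LinearMap.smulRight_apply, smul_eq_mul,
      LinearMap.smul_apply]
    ring
  map_smul' c a := by
    ext v w
    simp only [LinearMap.add_apply, LinearMap.smulRight_apply, smul_eq_mul,
      LinearMap.smul_apply, RingHom.id_apply]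
    ring

/-- Evaluation of a covector at the fixed vector `X`, as a linear map. -/
noncomputable def evalAt [AddCommGroup V] [Module ℝ V] (X : V) :
    Module.Dual ℝ V →ₗ[ℝ] ℝ where
  toFun a := a X
  map_add' a b := rfl
  map_smul' c a := rfl

/-- The subspace `V₁` of symmetric bilinear forms `H` with `H(X,·) = 0` and vanishing
`ḡ`-trace, where the index is raised with the inverse `φ⁻¹` of `v ↦ ḡ(v,·)`. -/
noncomputable def V1sub [AddCommGroup V] [Module ℝ V]
    (φ : V ≃ₗ[ℝ] Module.Dual ℝ V) (X : V) : Submodule ℝ (V →ₗ[ℝ] V →ₗ[ℝ] ℝ) where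
  carrier := {H | (∀ v w, H v w = H w v) ∧ H X = 0 ∧
    LinearMap.trace ℝ V (φ.symm.toLinearMap ∘ₗ H) = 0}
  zero_mem' := ⟨fun v w => rfl, rfl, by simp⟩
  add_mem' := by
    rintro a b ⟨ha1, ha2, ha3⟩ ⟨hb1, hb2, hb3⟩
    refine ⟨fun v w => by simp [ha1 v w, hb1 v w], by simp [ha2, hb2], ?_⟩
    rw [LinearMap.comp_add, map_add, ha3, hb3, add_zero]
  smul_mem' := by
    rintro c a ⟨ha1, ha2, ha3⟩
    refine ⟨fun v w => by simp [ha1 v w], by simp [ha2], ?_⟩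
    rw [LinearMap.comp_smul, map_smul, ha3, smul_zero]

open Module LinearMap

section SymmetricBilinearForms

def symBilin (K V : Type*) [Field K] [AddCommGroup V] [Module K V] :
    Submodule K (V →ₗ[K] V →ₗ[K] K) where
  carrier := {H | ∀ v w, H v w = H w v}
  zero_mem' _ _ := rfl
  add_mem' ha hb v w := by simp [ha v w, hb v w]
  smul_mem' c H hH v w := by simp [hH v w]

variable {K : Type*} [Field K] [AddCommGroup V] [Module K V]

theorem mem_symBilin {H : V →ₗ[K] V →ₗ[K] K} : H ∈ symBilin K V ↔ ∀ v w, H v w = H w v :=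
  Iff.rfl

variable {ι : Type*} [Fintype ι] [DecidableEq ι]

noncomputable def Module.Basis.bilinOfSym2 (b : Basis ι K V) :
    (Sym2 ι → K) →ₗ[K] V →ₗ[K] V →ₗ[K] K :=
  (Matrix.toLinearMap₂ b b).toLinearMap ∘ₗ
    { toFun f := Matrix.of fun i j => f s(i, j)
      map_add' _ _ := rfl
      map_smul' _ _ := rfl }

theorem Module.Basis.bilinOfSym2_apply_basis (b : Basis ι K V) (f : Sym2 ι → K) (i j : ι) :
    b.bilinOfSym2 f (b i) (b j) = f s(i, j) :=
  Matrix.toLinearMap₂_apply_basis b b _ i j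

theorem Module.Basis.bilinOfSym2_injective (b : Basis ι K V) :
    Function.Injective b.bilinOfSym2 := by
  refine (injective_iff_map_eq_zero _).2 fun f hf => funext fun s => ?_
  induction s using Sym2.ind with
  | _ i j => simpa [hf] using (b.bilinOfSym2_apply_basis f i j).symm

theorem Module.Basis.range_bilinOfSym2 (b : Basis ι K V) :
    range b.bilinOfSym2 = symBilin K V := by
  refine le_antisymm ?_ fun H hH => ?_
  · rintro _ ⟨f, rfl⟩
    have hflip : (b.bilinOfSym2 f).flip = b.bilinOfSym2 f := b.ext fun i => b.ext fun j => by
      rw [flip_apply, bilinOfSym2_apply_basis, bilinOfSym2_apply_basis, Sym2.eq_swap]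
    exact fun v w => congrArg (fun B => B w v) hflip
  · refine ⟨Sym2.lift ⟨fun i j => H (b i) (b j), fun i j => hH (b i) (b j)⟩, ?_⟩
    exact b.ext fun i => b.ext fun j => b.bilinOfSym2_apply_basis _ i j

variable [FiniteDimensional K V]

theorem finrank_symBilin :
    finrank K (symBilin K V) = finrank K V * (finrank K V + 1) / 2 := by
  let b := Module.finBasis K V
  rw [← b.range_bilinOfSym2, finrank_range_of_inj b.bilinOfSym2_injective,
    Module.finrank_fintype_fun_eq_card, Sym2.card, Fintype.card_fin, Nat.choose_two_right,
    Nat.add_sub_cancel, Nat.mul_comm]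

end SymmetricBilinearForms

theorem Submodule.finrank_sup_sup_sup {K M : Type*} [DivisionRing K] [AddCommGroup M]
    [Module K M] [FiniteDimensional K M] (A B C D : Submodule K M)
    (h : ∀ a b c d : M, a ∈ A → b ∈ B → c ∈ C → d ∈ D →
      a + b + c + d = 0 → a = 0 ∧ b = 0 ∧ c = 0 ∧ d = 0) :
    finrank K ↥(A ⊔ B ⊔ C ⊔ D) = finrank K A + finrank K B + finrank K C + finrank K D := by
  let F := A.subtype.coprod (B.subtype.coprod (C.subtype.coprod D.subtype))
  have hrange : range F = A ⊔ B ⊔ C ⊔ D := by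
    simp only [F, range_coprod, Submodule.range_subtype, sup_assoc]
  have hF : Function.Injective F := by
    refine (injective_iff_map_eq_zero F).2 fun ⟨a, b, c, d⟩ hx => ?_
    obtain ⟨ha, hb, hc, hd⟩ := h a b c d a.2 b.2 c.2 d.2 (by simpa [F, add_assoc] using hx)
    simp only [Prod.mk_eq_zero, ← Submodule.coe_eq_zero]
    exact ⟨ha, hb, hc, hd⟩
  rw [← hrange, finrank_range_of_inj hF]
  simp only [Module.finrank_prod, add_assoc]

theorem LinearMap.trace_comp_smulRight {R M N : Type*} [CommRing R] [AddCommGroup M]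
    [Module R M] [Module.Free R M] [Module.Finite R M] [AddCommGroup N] [Module R N]
    (f : N →ₗ[R] M) (a : M →ₗ[R] R) (x : N) :
    trace R M (f ∘ₗ a.smulRight x) = a (f x) := by
  have : f ∘ₗ a.smulRight x = a.smulRight (f x) := by ext; simp
  rw [this, trace_smulRight]

theorem finrank_ker_evalAt [AddCommGroup V] [Module ℝ V] [FiniteDimensional ℝ V] {X : V}
    (hX : X ≠ 0) : finrank ℝ (ker (evalAt X)) = finrank ℝ V - 1 := by
  have hne : evalAt X ≠ 0 := fun h =>
    hX <| (forall_dual_apply_eq_zero_iff ℝ X).1 fun f => congrArg (· f) h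
  have := finrank_range_add_finrank_ker (evalAt X)
  rw [range_eq_top.2 (surjective_of_ne_zero hne), finrank_top, finrank_self,
    Subspace.dual_finrank_eq] at this
  omega

section SymmetrizedProduct

variable [AddCommGroup V] [Module ℝ V]

@[simp]
theorem symT_apply (ξ a : Dual ℝ V) (v w : V) : symT ξ a v w = a v * ξ w + ξ v * a w := by
  simp [symT]

theorem symT_mem_symBilin (ξ a : Dual ℝ V) : symT ξ a ∈ symBilin ℝ V := fun v w => by
  simp only [symT_apply]; ring

theorem symT_apply_of_apply_eq_zero {ξ a : Dual ℝ V} {X : V} (hξ : ξ X = 1) (ha : a X = 0) :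
    symT ξ a X = a := by
  ext w; simp [hξ, ha]

theorem symT_injective {ξ : Dual ℝ V} (hξ : ξ ≠ 0) : Function.Injective (symT ξ) := by
  obtain ⟨X, hX⟩ : ∃ X, ξ X ≠ 0 := by simpa [DFunLike.ne_iff] using hξ
  refine (injective_iff_map_eq_zero _).2 fun a ha => ?_
  have hval (w : V) : a X * ξ w + ξ X * a w = 0 := by simpa using congrArg (· X w) ha
  have haX : a X = 0 := by
    have : 2 * ξ X * a X = 0 := by linear_combination hval X
    simpa [hX] using this
  ext w
  simpa [haX, hX] using hval w

theorem trace_comp_symT [FiniteDimensional ℝ V] (f : Dual ℝ V →ₗ[ℝ] V) (ξ a : Dual ℝ V) :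
    trace ℝ V (f ∘ₗ symT ξ a) = a (f ξ) + ξ (f a) := by
  change trace ℝ V (f ∘ₗ (a.smulRight ξ + ξ.smulRight a)) = _
  rw [comp_add, map_add, trace_comp_smulRight, trace_comp_smulRight]

theorem finrank_map_symT_ker_evalAt [FiniteDimensional ℝ V] {ξ : Dual ℝ V} {X : V}
    (hξX : ξ X = 1) :
    finrank ℝ (Submodule.map (symT ξ) (ker (evalAt X))) = finrank ℝ V - 1 := by
  have hξ : ξ ≠ 0 := fun h => by simp [h] at hξX
  have hX : X ≠ 0 := fun h => by simp [h] at hξX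
  rw [← (Submodule.equivMapOfInjective _ (symT_injective hξ) _).finrank_eq,
    finrank_ker_evalAt hX]

end SymmetrizedProduct

section Decomposition

variable [AddCommGroup V] [Module ℝ V] {n : ℕ}
  {g : V →ₗ[ℝ] V →ₗ[ℝ] ℝ} {φ : V ≃ₗ[ℝ] Dual ℝ V} {ξ : Dual ℝ V} {X : V}

theorem trace_symm_comp_self [FiniteDimensional ℝ V] (hφ : ∀ v, φ v = g v) :
    trace ℝ V (φ.symm.toLinearMap ∘ₗ g) = finrank ℝ V := by
  have : φ.symm.toLinearMap ∘ₗ g = LinearMap.id := by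
    ext v
    simp [← hφ]
  rw [this, trace_id]

theorem trace_symm_comp_symT [FiniteDimensional ℝ V] (hg : ∀ v w, g v w = g w v)
    (hφ : ∀ v, φ v = g v) (hXg : g X = ξ) (a : Dual ℝ V) :
    trace ℝ V (φ.symm.toLinearMap ∘ₗ symT ξ a) = 2 * a X := by
  have hξ : ξ (φ.symm a) = a X := by
    rw [← hXg, hg, ← hφ, φ.apply_symm_apply]
  rw [trace_comp_symT, LinearEquiv.coe_coe, φ.symm_apply_eq.2 (by rw [hφ, hXg]), hξ]
  ring

theorem trace_symm_comp_V2gen [FiniteDimensional ℝ V] (hdim : finrank ℝ V = n + 1)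
    (hφ : ∀ v, φ v = g v) (hXg : g X = ξ) (hXξ : ξ X = 1) :
    trace ℝ V (φ.symm.toLinearMap ∘ₗ (((n : ℝ) + 1) • ξ.smulRight ξ - g)) = 0 := by
  rw [comp_sub, comp_smul, map_sub, map_smul, trace_symm_comp_self hφ, trace_comp_smulRight,
    LinearEquiv.coe_coe, φ.symm_apply_eq.2 (by rw [hφ, hXg]), hXξ, hdim]
  simp

theorem V2gen_apply_self (hXg : g X = ξ) (hXξ : ξ X = 1) :
    (((n : ℝ) + 1) • ξ.smulRight ξ - g) X = (n : ℝ) • ξ := by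
  ext w
  simp only [LinearMap.sub_apply, LinearMap.smul_apply, coe_smulRight, hXξ, one_smul, hXg,
    smul_eq_mul]
  ring

theorem V2gen_mem_symBilin (hg : ∀ v w, g v w = g w v) :
    ((n : ℝ) + 1) • ξ.smulRight ξ - g ∈ symBilin ℝ V := fun v w => by
  simp [hg v w, mul_comm]

theorem exists_decomposition [FiniteDimensional ℝ V] (hn : n ≠ 0) (hdim : finrank ℝ V = n + 1)
    (hg : ∀ v w, g v w = g w v) (hφ : ∀ v, φ v = g v) (hXg : g X = ξ) (hXξ : ξ X = 1)
    {H : V →ₗ[ℝ] V →ₗ[ℝ] ℝ} (hH : H ∈ symBilin ℝ V) :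
    ∃ H0 ∈ Submodule.span ℝ {g}, ∃ H1 ∈ V1sub φ X,
      ∃ H2 ∈ Submodule.span ℝ {((n : ℝ) + 1) • ξ.smulRight ξ - g},
        ∃ H3 ∈ Submodule.map (symT ξ) (ker (evalAt X)), H = H0 + H1 + H2 + H3 := by
  set a := H X - H X X • ξ
  have haX : a X = 0 := by simp [a, hXξ]
  set c := trace ℝ V (φ.symm.toLinearMap ∘ₗ H) / ((n : ℝ) + 1)
  set d := (H X X - c) / n
  have hc : c * ((n : ℝ) + 1) = trace ℝ V (φ.symm.toLinearMap ∘ₗ H) := by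
    simp only [c]; field_simp
  have hd : d * n = H X X - c := by
    simp only [d]; field_simp
  have hsymm :
      H - c • g - d • (((n : ℝ) + 1) • ξ.smulRight ξ - g) - symT ξ a ∈ symBilin ℝ V := by
    intro v w
    simp only [a, LinearMap.sub_apply, LinearMap.smul_apply, smul_eq_mul, symT_apply,
      LinearMap.smulRight_apply, hH v w, hg v w]
    ring
  refine ⟨c • g, Submodule.mem_span_singleton.2 ⟨c, rfl⟩,
    H - c • g - d • (((n : ℝ) + 1) • ξ.smulRight ξ - g) - symT ξ a, ⟨hsymm, ?_, ?_⟩,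
    d • (((n : ℝ) + 1) • ξ.smulRight ξ - g), Submodule.mem_span_singleton.2 ⟨d, rfl⟩,
    symT ξ a, ⟨a, haX, rfl⟩, by abel⟩
  · rw [LinearMap.sub_apply, LinearMap.sub_apply, LinearMap.sub_apply, LinearMap.smul_apply,
      LinearMap.smul_apply, hXg, V2gen_apply_self hXg hXξ, symT_apply_of_apply_eq_zero hXξ haX]
    ext w
    simp only [a, LinearMap.sub_apply, LinearMap.smul_apply, smul_eq_mul, LinearMap.zero_apply]
    linear_combination (-ξ w) * hd
  · rw [comp_sub, comp_sub, comp_sub, comp_smul, comp_smul, map_sub, map_sub, map_sub, map_smul,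
      map_smul, trace_symm_comp_self hφ, trace_symm_comp_V2gen hdim hφ hXg hXξ,
      trace_symm_comp_symT hg hφ hXg, haX, hdim, ← hc]
    push_cast
    ring

theorem decomposition_unique [FiniteDimensional ℝ V] (hn : n ≠ 0) (hdim : finrank ℝ V = n + 1)
    (hg : ∀ v w, g v w = g w v) (hφ : ∀ v, φ v = g v) (hXg : g X = ξ) (hXξ : ξ X = 1) :
    ∀ H0 H1 H2 H3 : V →ₗ[ℝ] V →ₗ[ℝ] ℝ,
      H0 ∈ Submodule.span ℝ {g} → H1 ∈ V1sub φ X →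
      H2 ∈ Submodule.span ℝ {((n : ℝ) + 1) • ξ.smulRight ξ - g} →
      H3 ∈ Submodule.map (symT ξ) (ker (evalAt X)) →
      H0 + H1 + H2 + H3 = 0 → H0 = 0 ∧ H1 = 0 ∧ H2 = 0 ∧ H3 = 0 := by
  rintro H0 H1 H2 H3 h0 ⟨-, hH1X, hH1tr⟩ h2 ⟨a, haX, rfl⟩ hsum
  obtain ⟨c, rfl⟩ := Submodule.mem_span_singleton.1 h0
  obtain ⟨d, rfl⟩ := Submodule.mem_span_singleton.1 h2
  change a X = 0 at haX
  have hsumX : (c + d * n) • ξ + a = 0 := by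
    have := congrArg (· X) hsum
    simp only [LinearMap.add_apply, LinearMap.smul_apply, hXg, hH1X, V2gen_apply_self hXg hXξ,
      symT_apply_of_apply_eq_zero hXξ haX, LinearMap.zero_apply] at this
    rw [← this]
    module
  have hcd : c + d * n = 0 := by
    simpa [hXξ, haX] using congrArg (· X) hsumX
  have ha : a = 0 := by simpa [hcd] using hsumX
  have hc : c = 0 := by
    have htr := congrArg (fun H => trace ℝ V (φ.symm.toLinearMap ∘ₗ H)) hsum
    simp only [comp_add, comp_smul, map_add, map_smul, comp_zero, map_zero] at htr
    rw [trace_symm_comp_self hφ, trace_symm_comp_V2gen hdim hφ hXg hXξ, hH1tr,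
      trace_symm_comp_symT hg hφ hXg, haX, hdim] at htr
    have : c * ((n : ℝ) + 1) = 0 := by push_cast at htr; linear_combination htr
    exact (mul_eq_zero.1 this).resolve_right (by positivity)
  have hd : d = 0 := by
    simpa [hc, hn] using hcd
  subst hc hd ha
  simp only [zero_smul, map_zero, zero_add, add_zero] at hsum
  simp [hsum]

theorem finrank_V0 (hXg : g X = ξ) (hXξ : ξ X = 1) :
    finrank ℝ (Submodule.span ℝ {g}) = 1 := by
  refine finrank_span_singleton (K := ℝ) (V := V →ₗ[ℝ] V →ₗ[ℝ] ℝ) fun h => ?_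
  rw [h, LinearMap.zero_apply] at hXg
  rw [← hXg, LinearMap.zero_apply] at hXξ
  exact zero_ne_one hXξ

theorem finrank_V2 (hn : n ≠ 0) (hXg : g X = ξ) (hXξ : ξ X = 1) :
    finrank ℝ (Submodule.span ℝ {((n : ℝ) + 1) • ξ.smulRight ξ - g}) = 1 := by
  refine finrank_span_singleton (K := ℝ) (V := V →ₗ[ℝ] V →ₗ[ℝ] ℝ) fun h => hn ?_
  simpa [hXξ] using congrArg (· X) ((V2gen_apply_self hXg hXξ).symm.trans (congrArg (· X) h))

theorem finrank_V1sub [FiniteDimensional ℝ V] (hn : n ≠ 0) (hdim : finrank ℝ V = n + 1)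
    (hg : ∀ v w, g v w = g w v) (hφ : ∀ v, φ v = g v) (hXg : g X = ξ) (hXξ : ξ X = 1) :
    finrank ℝ (V1sub φ X) = n * (n + 1) / 2 - 1 := by
  have hsup : Submodule.span ℝ {g} ⊔ V1sub φ X ⊔
      Submodule.span ℝ {((n : ℝ) + 1) • ξ.smulRight ξ - g} ⊔
      Submodule.map (symT ξ) (ker (evalAt X)) = symBilin ℝ V := by
    refine le_antisymm (sup_le (sup_le (sup_le ?_ fun H hH => hH.1) ?_) ?_) fun H hH => ?_
    · exact (Submodule.span_singleton_le_iff_mem _ _).2 hg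
    · exact (Submodule.span_singleton_le_iff_mem _ _).2 (V2gen_mem_symBilin hg)
    · rintro _ ⟨a, -, rfl⟩
      exact symT_mem_symBilin ξ a
    · obtain ⟨H0, h0, H1, h1, H2, h2, H3, h3, rfl⟩ :=
        exists_decomposition hn hdim hg hφ hXg hXξ hH
      exact add_mem (add_mem (add_mem (Submodule.mem_sup_left (Submodule.mem_sup_left
        (Submodule.mem_sup_left h0))) (Submodule.mem_sup_left (Submodule.mem_sup_left
        (Submodule.mem_sup_right h1)))) (Submodule.mem_sup_left (Submodule.mem_sup_right h2)))
        (Submodule.mem_sup_right h3)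
  have hdims := Submodule.finrank_sup_sup_sup (K := ℝ) (M := V →ₗ[ℝ] V →ₗ[ℝ] ℝ) _ _ _ _
    (decomposition_unique hn hdim hg hφ hXg hXξ)
  rw [hsup, finrank_symBilin, finrank_V0 hXg hXξ, finrank_V2 hn hXg hXξ,
    finrank_map_symT_ker_evalAt hXξ, hdim] at hdims
  have : (n + 1) * (n + 1 + 1) = n * (n + 1) + 2 * (n + 1) := by ring
  rw [this, Nat.add_mul_div_left _ _ two_pos] at hdims
  omega

end Decomposition

/-- Pointwise decomposition of symmetric bilinear forms (Proposition 4.1 of the paper):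
if `dim V = n + 1`, `ḡ` is a nondegenerate symmetric bilinear form on `V` (nondegeneracy
being expressed by the linear equivalence `φ : V ≃ V*` with `φ v = ḡ(v,·)`), and
`ξ ∈ V*` has `ḡ`-dual vector `X` with `ξ(X) = 1`, then every symmetric bilinear form
decomposes uniquely as a sum of elements of `V₀ = ℝ ḡ`,
`V₁ = {H symmetric : H(X,·) = 0, tr_ḡ H = 0}`, `V₂ = ℝ ((n+1) ξ⊗ξ − ḡ)` and
`V₃ = {a⊗ξ + ξ⊗a : a(X) = 0}`, and these subspaces have dimensions
`1`, `n(n+1)/2 − 1`, `1` and `n` respectively. -/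
theorem symmetric_tensor_decomposition [AddCommGroup V] [Module ℝ V]
    [FiniteDimensional ℝ V]
    (n : ℕ) (hn : 2 ≤ n) (hdim : Module.finrank ℝ V = n + 1)
    (g : V →ₗ[ℝ] V →ₗ[ℝ] ℝ) (hg : ∀ v w, g v w = g w v)
    (φ : V ≃ₗ[ℝ] Module.Dual ℝ V) (hφ : ∀ v, φ v = g v)
    (ξ : Module.Dual ℝ V) (X : V) (hXg : g X = ξ) (hXξ : ξ X = 1) :
    (∀ H : V →ₗ[ℝ] V →ₗ[ℝ] ℝ, (∀ v w, H v w = H w v) →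
      ∃ H0 ∈ Submodule.span ℝ {g}, ∃ H1 ∈ V1sub φ X,
        ∃ H2 ∈ Submodule.span ℝ {((n : ℝ) + 1) • ξ.smulRight ξ - g},
          ∃ H3 ∈ Submodule.map (symT ξ) (LinearMap.ker (evalAt X)),
            H = H0 + H1 + H2 + H3) ∧
    (∀ H0 H1 H2 H3 : V →ₗ[ℝ] V →ₗ[ℝ] ℝ,
      H0 ∈ Submodule.span ℝ {g} → H1 ∈ V1sub φ X →
      H2 ∈ Submodule.span ℝ {((n : ℝ) + 1) • ξ.smulRight ξ - g} →
      H3 ∈ Submodule.map (symT ξ) (LinearMap.ker (evalAt X)) →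
      H0 + H1 + H2 + H3 = 0 → H0 = 0 ∧ H1 = 0 ∧ H2 = 0 ∧ H3 = 0) ∧
    Module.finrank ℝ (Submodule.span ℝ {g}) = 1 ∧
    Module.finrank ℝ (V1sub φ X) = n * (n + 1) / 2 - 1 ∧
    Module.finrank ℝ
      (Submodule.span ℝ {((n : ℝ) + 1) • ξ.smulRight ξ - g} :
        Submodule ℝ (V →ₗ[ℝ] V →ₗ[ℝ] ℝ)) = 1 ∧
    Module.finrank ℝ (Submodule.map (symT ξ) (LinearMap.ker (evalAt X))) = n := by
  have hn0 : n ≠ 0 := by omega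
  refine ⟨fun H hH => exists_decomposition hn0 hdim hg hφ hXg hXξ hH,
    decomposition_unique hn0 hdim hg hφ hXg hXξ, finrank_V0 hXg hXξ,
    finrank_V1sub hn0 hdim hg hφ hXg hXξ, finrank_V2 hn0 hXg hXξ, ?_⟩
  rw [finrank_map_symT_ker_evalAt hXξ, hdim, Nat.add_sub_cancel]
end
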